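/- arXiv:math/0307348 — 7 statements merged into one kernel-verified Lean document; each statement's English description precedes it below -/
import Mathlib

section
/- For n ≥ 1 and any constant C > 0, the double integral over ξ ∈ ℝⁿ and ρ ∈ [0,1] of C/(√(ρ² + 2ρ‖ξ‖) · (1+‖ξ‖+ρ)^(n+2)) is finite. -/
open MeasureTheory Set Metric
open scoped ENNReal

lemma aux_ball (n : ℕ) (hn : 1 ≤ n) :
    IntegrableOn (fun ξ : EuclideanSpace ℝ (Fin n) => ‖ξ‖ ^ (-(1/2) : ℝ))
      (Metric.ball 0 1) := by
  haveI : Nonempty (Fin n) := ⟨⟨0, hn⟩⟩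
  let E := EuclideanSpace ℝ (Fin n)
  have hmeas : Measurable fun ξ : E => ‖ξ‖ ^ (-(1/2) : ℝ) := by fun_prop
  refine ⟨hmeas.aestronglyMeasurable, ?_⟩
  have hnn : ∀ ξ : E, 0 ≤ ‖ξ‖ ^ (-(1/2) : ℝ) := fun ξ =>
    Real.rpow_nonneg (norm_nonneg ξ) _
  rw [hasFiniteIntegral_iff_ofReal (ae_of_all _ hnn)]
  rw [lintegral_eq_lintegral_meas_le _ (ae_of_all _ hnn) hmeas.aemeasurable]
  have hsub : ∀ t ∈ Ioi (0 : ℝ),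
      (volume.restrict (ball (0 : E) 1)) {a : E | t ≤ ‖a‖ ^ (-(1/2) : ℝ)}
        ≤ ENNReal.ofReal ((min 1 (t ^ (-2 : ℝ))) ^ n) * volume (ball (0 : E) 1) := by
    intro t ht
    have htpos : (0 : ℝ) < t := ht
    have hms : MeasurableSet {a : E | t ≤ ‖a‖ ^ (-(1/2) : ℝ)} :=
      measurableSet_le measurable_const hmeas
    rw [Measure.restrict_apply hms]
    have hsubset : {a : E | t ≤ ‖a‖ ^ (-(1/2) : ℝ)} ∩ ball (0 : E) 1
        ⊆ closedBall (0 : E) (min 1 (t ^ (-2 : ℝ))) := by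
      rintro a ⟨ha1, ha2⟩
      rw [mem_closedBall_zero_iff]
      rw [mem_ball_zero_iff] at ha2
      refine le_min ha2.le ?_
      rcases eq_or_lt_of_le (norm_nonneg a) with h0 | h0
      · rw [← h0]
        exact (Real.rpow_pos_of_pos htpos _).le
      · have key : (‖a‖ ^ (-(1/2) : ℝ)) ^ (-2 : ℝ) ≤ t ^ (-2 : ℝ) :=
          Real.rpow_le_rpow_of_nonpos htpos ha1 (by norm_num)
        calc ‖a‖ = (‖a‖ ^ (-(1/2) : ℝ)) ^ (-2 : ℝ) := by
              rw [← Real.rpow_mul (norm_nonneg a)]; norm_num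
          _ ≤ t ^ (-2 : ℝ) := key
    calc volume ({a : E | t ≤ ‖a‖ ^ (-(1/2) : ℝ)} ∩ ball (0 : E) 1)
        ≤ volume (closedBall (0 : E) (min 1 (t ^ (-2 : ℝ)))) := measure_mono hsubset
      _ = ENNReal.ofReal ((min 1 (t ^ (-2 : ℝ))) ^ Module.finrank ℝ E)
            * volume (ball (0 : E) 1) :=
          Measure.addHaar_closedBall _ _ (le_min zero_le_one (Real.rpow_pos_of_pos htpos _).le)
      _ = _ := by rw [show Module.finrank ℝ E = n from finrank_euclideanSpace_fin]
  refine lt_of_le_of_lt (setLIntegral_mono' measurableSet_Ioi hsub) ?_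
  rw [lintegral_mul_const' _ _ measure_ball_lt_top.ne]
  refine ENNReal.mul_lt_top ?_ measure_ball_lt_top
  calc ∫⁻ t in Ioi (0:ℝ), ENNReal.ofReal ((min 1 (t ^ (-2 : ℝ))) ^ n)
      ≤ ∫⁻ t in Ioc (0:ℝ) 1 ∪ Ioi 1, ENNReal.ofReal ((min 1 (t ^ (-2 : ℝ))) ^ n) :=
        lintegral_mono_set Ioi_subset_Ioc_union_Ioi
    _ ≤ (∫⁻ t in Ioc (0:ℝ) 1, ENNReal.ofReal ((min 1 (t ^ (-2 : ℝ))) ^ n))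
        + ∫⁻ t in Ioi (1:ℝ), ENNReal.ofReal ((min 1 (t ^ (-2 : ℝ))) ^ n) :=
        lintegral_union_le _ _ _
    _ < ∞ := by
        refine ENNReal.add_lt_top.2 ⟨?_, ?_⟩
        · calc (∫⁻ t in Ioc (0:ℝ) 1, ENNReal.ofReal ((min 1 (t ^ (-2 : ℝ))) ^ n))
              ≤ ∫⁻ _ in Ioc (0:ℝ) 1, 1 := by
                refine setLIntegral_mono' measurableSet_Ioc fun t ht => ?_
                rw [← ENNReal.ofReal_one]
                exact ENNReal.ofReal_le_ofReal (pow_le_one₀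
                  (le_min zero_le_one (Real.rpow_nonneg ht.1.le _)) (min_le_left _ _))
            _ = volume (Ioc (0:ℝ) 1) := by simp
            _ < ∞ := by simp [Real.volume_Ioc]
        · refine lt_of_le_of_lt (setLIntegral_mono' measurableSet_Ioi fun t ht => ?_)
            ((integrableOn_Ioi_rpow_of_lt (by norm_num : (-2:ℝ) < -1) one_pos).setLIntegral_lt_top)
          have ht1 : (1:ℝ) < t := ht
          have h0 : (0:ℝ) ≤ min 1 (t ^ (-2 : ℝ)) :=
            le_min zero_le_one (Real.rpow_nonneg (by linarith) _)
          refine ENNReal.ofReal_le_ofReal ?_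
          calc (min 1 (t ^ (-2 : ℝ))) ^ n ≤ min 1 (t ^ (-2 : ℝ)) :=
                pow_le_of_le_one h0 (min_le_left _ _) (by omega)
            _ ≤ t ^ (-2 : ℝ) := min_le_right _ _

/-- For `n ≥ 1` and `C > 0`, the double integral over `ξ ∈ ℝⁿ`, `ρ ∈ [0,1]` of
`C/(√(ρ² + 2ρ‖ξ‖) · (1+‖ξ‖+ρ)^(n+2))` is finite. -/
theorem stmt_2 (n : ℕ) (hn : 1 ≤ n) (C : ℝ) (hC : 0 < C) :
    IntegrableOn
      (fun p : EuclideanSpace ℝ (Fin n) × ℝ =>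
        C / (Real.sqrt (p.2 ^ 2 + 2 * p.2 * ‖p.1‖) * (1 + ‖p.1‖ + p.2) ^ (n + 2)))
      (Set.univ ×ˢ Set.Icc (0 : ℝ) 1) := by
  haveI : Nonempty (Fin n) := ⟨⟨0, hn⟩⟩
  set G : EuclideanSpace ℝ (Fin n) → ℝ :=
    fun ξ => ‖ξ‖ ^ (-(1/2) : ℝ) * (1 + ‖ξ‖) ^ (-((n : ℝ) + 2)) with hGdef
  have hG : Integrable G := by
    rw [← integrableOn_univ, show (univ : Set (EuclideanSpace ℝ (Fin n)))
      = Metric.ball 0 1 ∪ (Metric.ball 0 1)ᶜ from (union_compl_self _).symm]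
    refine IntegrableOn.union ?_ ?_
    · refine (aux_ball n hn).mono' (by fun_prop) ?_
      filter_upwards with ξ
      rw [Real.norm_of_nonneg (by positivity)]
      exact mul_le_of_le_one_right (Real.rpow_nonneg (norm_nonneg _) _)
        (Real.rpow_le_one_of_one_le_of_nonpos (by linarith [norm_nonneg ξ]) (by push_cast; linarith))
    · have hint : Integrable (fun ξ : EuclideanSpace ℝ (Fin n) =>
          (1 + ‖ξ‖) ^ (-((n : ℝ) + 2))) volume := by
        apply integrable_one_add_norm
        rw [finrank_euclideanSpace_fin]
        linarith
      refine hint.integrableOn.mono' (by fun_prop) ?_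
      filter_upwards [ae_restrict_mem measurableSet_ball.compl] with ξ hξ
      rw [mem_compl_iff, mem_ball_zero_iff, not_lt] at hξ
      rw [Real.norm_of_nonneg (by positivity)]
      exact mul_le_of_le_one_left (Real.rpow_nonneg (by positivity) _)
        (Real.rpow_le_one_of_one_le_of_nonpos hξ (by norm_num))
  have hH : IntegrableOn (fun ρ : ℝ => ρ ^ (-(1/2) : ℝ)) (Icc (0:ℝ) 1) := by
    rw [integrableOn_Icc_iff_integrableOn_Ioc,
      ← intervalIntegrable_iff_integrableOn_Ioc_of_le zero_le_one]
    exact intervalIntegral.intervalIntegrable_rpow' (by norm_num)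
  have hGH : IntegrableOn
      (fun p : EuclideanSpace ℝ (Fin n) × ℝ => C / Real.sqrt 2 * (G p.1 * p.2 ^ (-(1/2) : ℝ)))
      (univ ×ˢ Icc (0:ℝ) 1) := by
    rw [IntegrableOn, Measure.volume_eq_prod, ← Measure.prod_restrict, Measure.restrict_univ]
    exact (hG.mul_prod hH).const_mul _
  have hfm : Measurable (fun p : EuclideanSpace ℝ (Fin n) × ℝ =>
      C / (Real.sqrt (p.2 ^ 2 + 2 * p.2 * ‖p.1‖) * (1 + ‖p.1‖ + p.2) ^ (n + 2))) := by
    refine measurable_const.div ?_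
    fun_prop
  refine hGH.mono' hfm.aestronglyMeasurable ?_
  have hnull : (volume : Measure (EuclideanSpace ℝ (Fin n) × ℝ))
      {p : EuclideanSpace ℝ (Fin n) × ℝ | p.1 = 0} = 0 := by
    rw [Measure.volume_eq_prod,
      show {p : EuclideanSpace ℝ (Fin n) × ℝ | p.1 = 0}
        = ({(0 : EuclideanSpace ℝ (Fin n))} : Set _) ×ˢ (univ : Set ℝ) by
          ext p
          simp only [mem_setOf_eq, Set.mem_prod, mem_singleton_iff, mem_univ, and_true],
      Measure.prod_prod, measure_singleton, zero_mul]
  have hae1 : ∀ᵐ p : EuclideanSpace ℝ (Fin n) × ℝ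
      ∂(volume.restrict (univ ×ˢ Icc (0:ℝ) 1)), p.1 ≠ 0 :=
    ae_restrict_of_ae (ae_iff.mpr (by simpa using hnull))
  filter_upwards [hae1,
    ae_restrict_mem (MeasurableSet.univ.prod measurableSet_Icc)] with p hp1 hp2
  have hρ0 : 0 ≤ p.2 := hp2.2.1
  · set ξ := p.1
    set ρ := p.2
    rcases eq_or_lt_of_le hρ0 with hρ | hρ
    · simp [← hρ, Real.zero_rpow (by norm_num : (-(1/2) : ℝ) ≠ 0)]
    · have hξ : (0:ℝ) < ‖ξ‖ := norm_pos_iff.2 hp1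
      have hd' : (0:ℝ) < Real.sqrt 2 * (Real.sqrt ρ * (Real.sqrt ‖ξ‖ * (1 + ‖ξ‖) ^ (n + 2))) := by
        have := Real.sqrt_pos.2 hρ
        have := Real.sqrt_pos.2 hξ
        positivity
      rw [Real.norm_of_nonneg (div_nonneg hC.le (mul_nonneg (Real.sqrt_nonneg _)
        (pow_nonneg (by linarith [norm_nonneg ξ]) _)))]
      have step1 : C / (Real.sqrt (ρ ^ 2 + 2 * ρ * ‖ξ‖) * (1 + ‖ξ‖ + ρ) ^ (n + 2))
          ≤ C / (Real.sqrt 2 * (Real.sqrt ρ * (Real.sqrt ‖ξ‖ * (1 + ‖ξ‖) ^ (n + 2)))) := by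
        refine div_le_div_of_nonneg_left hC.le hd' ?_
        have h1 : Real.sqrt 2 * (Real.sqrt ρ * Real.sqrt ‖ξ‖)
            ≤ Real.sqrt (ρ ^ 2 + 2 * ρ * ‖ξ‖) := by
          rw [← Real.sqrt_mul hρ0 ‖ξ‖, ← Real.sqrt_mul (by norm_num : (0:ℝ) ≤ 2)]
          exact Real.sqrt_le_sqrt (by nlinarith [sq_nonneg ρ])
        have h2 : (1 + ‖ξ‖) ^ (n + 2) ≤ (1 + ‖ξ‖ + ρ) ^ (n + 2) :=
          pow_le_pow_left₀ (by positivity) (by linarith) _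
        calc Real.sqrt 2 * (Real.sqrt ρ * (Real.sqrt ‖ξ‖ * (1 + ‖ξ‖) ^ (n + 2)))
            = (Real.sqrt 2 * (Real.sqrt ρ * Real.sqrt ‖ξ‖)) * (1 + ‖ξ‖) ^ (n + 2) := by ring
          _ ≤ Real.sqrt (ρ ^ 2 + 2 * ρ * ‖ξ‖) * (1 + ‖ξ‖ + ρ) ^ (n + 2) := by
              refine mul_le_mul h1 h2 (by positivity) (Real.sqrt_nonneg _)
      refine step1.trans (le_of_eq ?_)
      simp only [hGdef]
      have e1 : ‖ξ‖ ^ (-(1/2) : ℝ) = (Real.sqrt ‖ξ‖)⁻¹ := by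
        rw [Real.rpow_neg (norm_nonneg _), Real.sqrt_eq_rpow]
      have e2 : ρ ^ (-(1/2) : ℝ) = (Real.sqrt ρ)⁻¹ := by
        rw [Real.rpow_neg hρ0, Real.sqrt_eq_rpow]
      have e3 : (1 + ‖ξ‖) ^ (-((n : ℝ) + 2)) = ((1 + ‖ξ‖) ^ (n + 2 : ℕ))⁻¹ := by
        rw [show -((n : ℝ) + 2) = -((n + 2 : ℕ) : ℝ) by push_cast; ring,
          Real.rpow_neg (by positivity), Real.rpow_natCast]
      rw [e1, e2, e3]
      have h2 : Real.sqrt 2 ≠ 0 := by positivity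
      have hρ' : Real.sqrt ρ ≠ 0 := (Real.sqrt_pos.2 hρ).ne'
      have hξ' : Real.sqrt ‖ξ‖ ≠ 0 := (Real.sqrt_pos.2 hξ).ne'
      have hp' : ((1 + ‖ξ‖) ^ (n + 2 : ℕ) : ℝ) ≠ 0 := by positivity
      field_simp
end

section
/- Let f : ℝ^(n+1) → ℝ be Schwartz and define |Kg^|(ξ,η) = (2π)ⁿ · (2/|Sⁿ|) · |f̂(ξ, √(‖η‖²−‖ξ‖²))| for ‖η‖ > ‖ξ‖ and 0 otherwise. Then Kg^ ∈ L^p(ℝⁿ × ℝ^(n+1)) for every p > 0. -/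
set_option maxHeartbeats 1000000


open MeasureTheory

open scoped SchwartzMap FourierTransform in
/-- Let `f` be Schwartz on `ℝ^(n+1)` and define
`(Kg)^(ξ,η) = (2π)ⁿ · (2/|Sⁿ|) · f̂(ξ, √(‖η‖²−‖ξ‖²))` for `‖η‖ > ‖ξ‖` and `0` otherwise.
Then `(Kg)^ ∈ L^p(ℝⁿ × ℝ^(n+1))` for every `p > 0`. -/
theorem stmt_6 (n : ℕ) (hn : 1 ≤ n)
    (f : SchwartzMap (EuclideanSpace ℝ (Fin (n + 1))) ℝ)
    (fhat : EuclideanSpace ℝ (Fin n) → ℝ → ℂ)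
    (hfhat : ∀ ξ r, fhat ξ r =
      FourierTransform.fourier (fun v => (f v : ℂ))
        ((EuclideanSpace.equiv (Fin (n + 1)) ℝ).symm
          (fun i => if h : (i : ℕ) < n then ξ ⟨i, h⟩ else r)))
    (S c : ℝ)
    (hS : S = ((n + 1 : ℕ) *
      volume (Metric.ball (0 : EuclideanSpace ℝ (Fin (n + 1))) 1)).toReal)
    (hc : c = (2 * Real.pi) ^ n * (2 / S))
    (Kghat : EuclideanSpace ℝ (Fin n) × EuclideanSpace ℝ (Fin (n + 1)) → ℂ)
    (hKghat : ∀ p, Kghat p =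
      if ‖p.1‖ < ‖p.2‖ then (c : ℂ) * fhat p.1 (Real.sqrt (‖p.2‖ ^ 2 - ‖p.1‖ ^ 2)) else 0) :
    ∀ p : ℝ, 0 < p → MemLp Kghat (ENNReal.ofReal p) volume := by
  intro p hp
  -- complexified Schwartz map
  let fc : 𝓢(EuclideanSpace ℝ (Fin (n + 1)), ℂ) :=
    { toFun := fun v => (f v : ℂ)
      smooth' := Complex.ofRealCLM.contDiff.comp (f.smooth _)
      decay' := by
        intro k m
        obtain ⟨C, hC⟩ := f.decay' k m
        refine ⟨C, fun x => ?_⟩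
        have heq : (fun v : EuclideanSpace ℝ (Fin (n + 1)) => (f v : ℂ))
            = (RCLike.ofRealLI : ℝ →ₗᵢ[ℝ] ℂ) ∘ ⇑f := rfl
        rw [heq, (RCLike.ofRealLI : ℝ →ₗᵢ[ℝ] ℂ).norm_iteratedFDeriv_comp_left
          (f.smooth ⊤).contDiffAt (by exact_mod_cast le_top)]
        exact hC x }
  let g : 𝓢(EuclideanSpace ℝ (Fin (n + 1)), ℂ) := SchwartzMap.fourierTransformCLE ℂ _ fc
  have hgapp : ∀ x : EuclideanSpace ℝ (Fin (n + 1)),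
      g x = FourierTransform.fourier (fun v => (f v : ℂ)) x := by
    intro x
    have : g x = 𝓕 (⇑fc) x := by
      rfl
    exact this
  -- the embedding
  let ι : EuclideanSpace ℝ (Fin n) → ℝ → EuclideanSpace ℝ (Fin (n + 1)) := fun ξ r =>
    (EuclideanSpace.equiv (Fin (n + 1)) ℝ).symm (fun i => if h : (i : ℕ) < n then ξ ⟨i, h⟩ else r)
  have hιcoord : ∀ (ξ : EuclideanSpace ℝ (Fin n)) (r : ℝ) (i : Fin (n + 1)),
      (ι ξ r) i = if h : (i : ℕ) < n then ξ ⟨i, h⟩ else r := fun _ _ _ => rfl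
  -- norm computation
  have hnorm : ∀ (ξ : EuclideanSpace ℝ (Fin n)) (η : EuclideanSpace ℝ (Fin (n + 1))),
      ‖ξ‖ ≤ ‖η‖ → ‖ι ξ (Real.sqrt (‖η‖ ^ 2 - ‖ξ‖ ^ 2))‖ = ‖η‖ := by
    intro ξ η hle
    have h1 : (0 : ℝ) ≤ ‖η‖ ^ 2 - ‖ξ‖ ^ 2 := by
      nlinarith [norm_nonneg ξ, norm_nonneg η]
    set r := Real.sqrt (‖η‖ ^ 2 - ‖ξ‖ ^ 2) with hr
    have hr2 : r ^ 2 = ‖η‖ ^ 2 - ‖ξ‖ ^ 2 := Real.sq_sqrt h1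
    have hξ : ∑ i : Fin n, ‖ξ i‖ ^ 2 = ‖ξ‖ ^ 2 := by
      rw [EuclideanSpace.norm_eq, Real.sq_sqrt]
      positivity
    have hsum : ∑ i : Fin (n + 1), ‖(ι ξ r) i‖ ^ 2 = ‖η‖ ^ 2 := by
      rw [Fin.sum_univ_castSucc]
      have h2 : ∀ i : Fin n, ‖(ι ξ r) i.castSucc‖ ^ 2 = ‖ξ i‖ ^ 2 := by
        intro i
        have hi : ((i.castSucc : Fin (n + 1)) : ℕ) < n := i.isLt
        rw [hιcoord, dif_pos hi]
        congr 1
      have hlast : ¬ ((Fin.last n : ℕ) < n) := by simp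
      have h3 : ‖(ι ξ r) (Fin.last n)‖ ^ 2 = r ^ 2 := by
        rw [hιcoord, dif_neg hlast, Real.norm_eq_abs, sq_abs]
      rw [h3, Finset.sum_congr rfl (fun i _ => h2 i), hξ, hr2]
      ring
    rw [EuclideanSpace.norm_eq, hsum, Real.sqrt_sq (norm_nonneg η)]
  -- rewrite Kghat as an indicator
  have hKeq : Kghat = Set.indicator
      {q : EuclideanSpace ℝ (Fin n) × EuclideanSpace ℝ (Fin (n + 1)) | ‖q.1‖ < ‖q.2‖}
      (fun q => (c : ℂ) * g (ι q.1 (Real.sqrt (‖q.2‖ ^ 2 - ‖q.1‖ ^ 2)))) := by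
    funext q
    rw [hKghat]
    by_cases h : ‖q.1‖ < ‖q.2‖
    · rw [if_pos h, hfhat]
      rw [Set.indicator_of_mem (show q ∈ {q : EuclideanSpace ℝ (Fin n) ×
        EuclideanSpace ℝ (Fin (n + 1)) | ‖q.1‖ < ‖q.2‖} from h), hgapp]
    · rw [if_neg h]
      rw [Set.indicator_of_notMem (show q ∉ {q : EuclideanSpace ℝ (Fin n) ×
        EuclideanSpace ℝ (Fin (n + 1)) | ‖q.1‖ < ‖q.2‖} from h)]
  -- measurability
  have hι_cont : Continuous (fun q : EuclideanSpace ℝ (Fin n) × ℝ => ι q.1 q.2) := by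
    apply (EuclideanSpace.equiv (Fin (n + 1)) ℝ).symm.continuous.comp
    apply continuous_pi
    intro i
    by_cases h : (i : ℕ) < n
    · simp only [dif_pos h]
      exact (EuclideanSpace.proj (⟨i, h⟩ : Fin n)).continuous.comp continuous_fst
    · simp only [dif_neg h]
      exact continuous_snd
  have hopen : IsOpen {q : EuclideanSpace ℝ (Fin n) × EuclideanSpace ℝ (Fin (n + 1)) |
      ‖q.1‖ < ‖q.2‖} :=
    isOpen_lt (continuous_norm.comp continuous_fst) (continuous_norm.comp continuous_snd)
  have hcont : Continuous (fun q : EuclideanSpace ℝ (Fin n) × EuclideanSpace ℝ (Fin (n + 1)) =>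
      (c : ℂ) * g (ι q.1 (Real.sqrt (‖q.2‖ ^ 2 - ‖q.1‖ ^ 2)))) := by
    apply continuous_const.mul
    apply g.continuous.comp
    exact hι_cont.comp (continuous_fst.prodMk
      ((continuous_norm.comp continuous_snd).pow 2 |>.sub
        ((continuous_norm.comp continuous_fst).pow 2)).sqrt)
  have hmeas : AEStronglyMeasurable Kghat volume := by
    rw [hKeq]
    exact (hcont.stronglyMeasurable.indicator hopen.measurableSet).aestronglyMeasurable
  -- decay estimate
  set k : ℕ := ⌈(2 * (n : ℝ) + 2) / p⌉₊ with hk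
  set M₀ : ℝ := 2 ^ k * (Finset.Iic (k, 0)).sup
    (fun m => SchwartzMap.seminorm ℝ m.1 m.2) g with hM₀
  have hM₀bound : ∀ x : EuclideanSpace ℝ (Fin (n + 1)), (1 + ‖x‖) ^ k * ‖g x‖ ≤ M₀ := by
    intro x
    have := SchwartzMap.one_add_le_sup_seminorm_apply (𝕜 := ℝ) (m := (k, 0))
      (le_refl k) (le_refl 0) g x
    simpa [norm_iteratedFDeriv_zero] using this
  have hM₀nonneg : 0 ≤ M₀ := le_trans (by positivity) (hM₀bound 0)
  set M : ℝ := ‖(c : ℂ)‖ * M₀ with hM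
  have hMnonneg : 0 ≤ M := mul_nonneg (norm_nonneg _) hM₀nonneg
  -- dominating function
  set B : EuclideanSpace ℝ (Fin n) × EuclideanSpace ℝ (Fin (n + 1)) → ℝ :=
    fun q => M * (1 + ‖q‖) ^ (-(k : ℝ)) with hB
  -- pointwise bound
  have hbound : ∀ q : EuclideanSpace ℝ (Fin n) × EuclideanSpace ℝ (Fin (n + 1)),
      ‖Kghat q‖ ≤ ‖B q‖ := by
    intro q
    have h1q : (0 : ℝ) < 1 + ‖q‖ := by positivity
    have hBval : ‖B q‖ = M * ((1 + ‖q‖) ^ k)⁻¹ := by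
      show ‖M * (1 + ‖q‖) ^ (-(k : ℝ))‖ = M * ((1 + ‖q‖) ^ k)⁻¹
      rw [Real.norm_eq_abs, abs_of_nonneg (by positivity),
        Real.rpow_neg h1q.le, Real.rpow_natCast]
    rw [hKghat, hBval]
    by_cases h : ‖q.1‖ < ‖q.2‖
    · rw [if_pos h]
      have hx : ‖ι q.1 (Real.sqrt (‖q.2‖ ^ 2 - ‖q.1‖ ^ 2))‖ = ‖q.2‖ :=
        hnorm q.1 q.2 (le_of_lt h)
      have hqn : ‖q‖ = ‖q.2‖ := by
        rw [Prod.norm_def, max_eq_right (le_of_lt h)]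
      rw [norm_mul, hfhat, ← hgapp]
      have hpos : (0 : ℝ) < (1 + ‖q‖) ^ k := by positivity
      have hgle : ‖g (ι q.1 (Real.sqrt (‖q.2‖ ^ 2 - ‖q.1‖ ^ 2)))‖ ≤
          M₀ * ((1 + ‖q‖) ^ k)⁻¹ := by
        have h0 := hM₀bound (ι q.1 (Real.sqrt (‖q.2‖ ^ 2 - ‖q.1‖ ^ 2)))
        rw [hx] at h0
        rw [hqn, ← div_eq_mul_inv, le_div_iff₀ (by positivity), mul_comm]
        exact h0
      calc ‖(c : ℂ)‖ * ‖g (ι q.1 (Real.sqrt (‖q.2‖ ^ 2 - ‖q.1‖ ^ 2)))‖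
          ≤ ‖(c : ℂ)‖ * (M₀ * ((1 + ‖q‖) ^ k)⁻¹) :=
            mul_le_mul_of_nonneg_left hgle (norm_nonneg _)
        _ = M * ((1 + ‖q‖) ^ k)⁻¹ := by rw [hM]; ring
    · rw [if_neg h]
      simp only [norm_zero]
      positivity
  -- the dominating function is in Lᵖ
  haveI : (volume : Measure (EuclideanSpace ℝ (Fin n) ×
      EuclideanSpace ℝ (Fin (n + 1)))).IsAddHaarMeasure :=
    MeasureTheory.Measure.prod.instIsAddHaarMeasure
      (volume : Measure (EuclideanSpace ℝ (Fin n)))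
      (volume : Measure (EuclideanSpace ℝ (Fin (n + 1))))
  have hfr : (Module.finrank ℝ (EuclideanSpace ℝ (Fin n) ×
      EuclideanSpace ℝ (Fin (n + 1))) : ℝ) < (k : ℝ) * p := by
    have h1 : Module.finrank ℝ (EuclideanSpace ℝ (Fin n) ×
        EuclideanSpace ℝ (Fin (n + 1))) = n + (n + 1) := by
      rw [Module.finrank_prod, finrank_euclideanSpace_fin, finrank_euclideanSpace_fin]
    have h2 : (2 * (n : ℝ) + 2) / p ≤ (k : ℝ) := Nat.le_ceil _
    have h3 : 2 * (n : ℝ) + 2 ≤ (k : ℝ) * p := by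
      rw [div_le_iff₀ hp] at h2
      linarith
    rw [h1]
    push_cast
    linarith
  have hB₀int : Integrable (fun q : EuclideanSpace ℝ (Fin n) ×
      EuclideanSpace ℝ (Fin (n + 1)) => (1 + ‖q‖) ^ (-((k : ℝ) * p))) volume :=
    integrable_one_add_norm hfr
  have hB₀mem : MemLp (fun q : EuclideanSpace ℝ (Fin n) ×
      EuclideanSpace ℝ (Fin (n + 1)) => (1 + ‖q‖) ^ (-(k : ℝ)))
      (ENNReal.ofReal p) volume := by
    have hq0 : ENNReal.ofReal p ≠ 0 := by
      simp [ENNReal.ofReal_eq_zero, not_le, hp]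
    have hqtop : ENNReal.ofReal p ≠ ⊤ := ENNReal.ofReal_ne_top
    have hmeas' : AEStronglyMeasurable (fun q : EuclideanSpace ℝ (Fin n) ×
        EuclideanSpace ℝ (Fin (n + 1)) => (1 + ‖q‖) ^ (-(k : ℝ))) volume := by
      apply Continuous.aestronglyMeasurable
      exact (continuous_const.add continuous_norm).rpow_const
        (fun x => Or.inl (ne_of_gt (add_pos_of_pos_of_nonneg one_pos (norm_nonneg _))))
    have key := (memLp_norm_rpow_iff (p := ENNReal.ofReal p) (q := ENNReal.ofReal p)
      hmeas' hq0 hqtop).mp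
    rw [ENNReal.div_self hq0 hqtop] at key
    apply key
    rw [memLp_one_iff_integrable]
    have heq : (fun x : EuclideanSpace ℝ (Fin n) × EuclideanSpace ℝ (Fin (n + 1)) =>
        ‖(1 + ‖x‖) ^ (-(k : ℝ))‖ ^ (ENNReal.ofReal p).toReal) =
        fun q : EuclideanSpace ℝ (Fin n) × EuclideanSpace ℝ (Fin (n + 1)) =>
          (1 + ‖q‖) ^ (-((k : ℝ) * p)) := by
      funext x
      have h1x : (0 : ℝ) < 1 + ‖x‖ := by positivity
      rw [Real.norm_eq_abs, abs_of_nonneg (Real.rpow_nonneg h1x.le _),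
        ENNReal.toReal_ofReal hp.le, ← Real.rpow_mul h1x.le, neg_mul]
    rw [heq]
    exact hB₀int
  have hBmem : MemLp B (ENNReal.ofReal p) volume := hB₀mem.const_mul M
  exact MemLp.of_le hBmem hmeas (Filter.Eventually.of_forall hbound)
end

section
/- For n ≥ 2, the double integral over r ∈ (0, 1/2] and ρ ∈ (0, 1/2] of r^(n−1)/(ρ² + 2ρr) diverges to infinity. -/
open MeasureTheory

lemma base_inv_top : ∫⁻ x in Set.Ioc (0:ℝ) (1/2), ENNReal.ofReal x⁻¹ = ⊤ := by
  by_contra h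
  have hmeas : AEStronglyMeasurable (fun x : ℝ => x⁻¹) (volume.restrict (Set.Ioc (0:ℝ) (1/2))) :=
    (Measurable.inv measurable_id).aestronglyMeasurable
  have hint : IntegrableOn (fun x : ℝ => x⁻¹) (Set.Ioc (0:ℝ) (1/2)) := by
    refine ⟨hmeas, ?_⟩
    rw [hasFiniteIntegral_iff_ofReal ?_]
    · exact lt_top_iff_ne_top.2 h
    · filter_upwards [ae_restrict_mem measurableSet_Ioc] with x hx
      exact inv_nonneg.2 hx.1.le
  have h2 : IntervalIntegrable (fun x : ℝ => x⁻¹) volume 0 (1/2) := by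
    rw [intervalIntegrable_iff]
    simpa [Set.uIoc_of_le (by norm_num : (0:ℝ) ≤ 1/2)] using hint
  rw [intervalIntegrable_inv_iff] at h2
  rcases h2 with h2 | h2
  · norm_num at h2
  · exact h2 (by simp [Set.uIcc_of_le (by norm_num : (0:ℝ) ≤ 1/2)])

lemma base_c_top {c : ℝ} (hc : 0 < c) :
    ∫⁻ x in Set.Ioc (0:ℝ) (1/2), ENNReal.ofReal (c / x) = ⊤ := by
  have : ∀ x : ℝ, ENNReal.ofReal (c / x) = ENNReal.ofReal c * ENNReal.ofReal x⁻¹ := by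
    intro x
    rw [div_eq_mul_inv, ENNReal.ofReal_mul hc.le]
  simp_rw [this]
  rw [lintegral_const_mul _ measurable_inv.ennreal_ofReal, base_inv_top, ENNReal.mul_top]
  simp [hc]

/-- For `n ≥ 2`, the double integral over `r ∈ (0, 1/2]`, `ρ ∈ (0, 1/2]` of
`r^(n−1)/(ρ² + 2ρr)` diverges to infinity. Here `q.1 = r` and `q.2 = ρ`. -/
theorem stmt_9 (n : ℕ) (hn : 2 ≤ n) :
    ∫⁻ q in Set.Ioc (0 : ℝ) (1 / 2) ×ˢ Set.Ioc (0 : ℝ) (1 / 2),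
      ENNReal.ofReal (q.1 ^ (n - 1) / (q.2 ^ 2 + 2 * q.2 * q.1)) = ⊤ := by
  have hmeas : Measurable fun q : ℝ × ℝ =>
      ENNReal.ofReal (q.1 ^ (n - 1) / (q.2 ^ 2 + 2 * q.2 * q.1)) := by
    apply Measurable.ennreal_ofReal
    fun_prop
  rw [Measure.volume_eq_prod, ← Measure.prod_restrict, lintegral_prod _ hmeas.aemeasurable]
  have hr : ∀ r ∈ Set.Ioc (0:ℝ) (1/2),
      (∫⁻ ρ in Set.Ioc (0:ℝ) (1/2),
        ENNReal.ofReal (r ^ (n-1) / (ρ^2 + 2*ρ*r))) = ⊤ := by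
    intro r hrmem
    have hrpos : 0 < r := hrmem.1
    have hc : 0 < (2/3) * r ^ (n-1) := by positivity
    refine top_le_iff.1 ?_
    rw [← base_c_top hc]
    refine lintegral_mono_ae ?_
    filter_upwards [ae_restrict_mem measurableSet_Ioc] with ρ hρ
    apply ENNReal.ofReal_le_ofReal
    have h1 : 0 < ρ := hρ.1
    have h2 : ρ^2 + 2*ρ*r ≤ (3/2)*ρ := by nlinarith [hρ.2, hrmem.2]
    have h3 : 0 < ρ^2 + 2*ρ*r := by positivity
    calc (2/3)*r^(n-1)/ρ = r^(n-1)/((3/2)*ρ) := by ring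
      _ ≤ r^(n-1)/(ρ^2+2*ρ*r) := by
          apply div_le_div_of_nonneg_left (by positivity) h3 h2
  rw [setLIntegral_congr_fun measurableSet_Ioc hr, lintegral_const,
    Measure.restrict_apply_univ, Real.volume_Ioc, ENNReal.top_mul]
  simp [ENNReal.ofReal_eq_zero]
end

section
/- Let f : ℝ^(n+1) → ℝ be Schwartz with f̂(0,0) ≠ 0, and define ĝ(ξ,η) = c · f̂(ξ, √(‖η‖²−‖ξ‖²)) / (‖η‖^(n−1) √(‖η‖²−‖ξ‖²)) for ‖η‖ > ‖ξ‖, and 0 otherwise, with c = (2π)ⁿ·2/|Sⁿ|. Then ĝ ∉ L²(ℝⁿ × ℝ^(n+1)). -/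
open MeasureTheory Metric

set_option maxHeartbeats 1000000


lemma aux_pow_gap (m : ℕ) (hm : 1 ≤ m) (c x h : ℝ) (hc : 0 < c) (hcx : c ≤ x) (hh : 0 ≤ h) :
    x ^ m + c ^ (m - 1) * h ≤ (x + h) ^ m := by
  obtain ⟨mm, rfl⟩ := Nat.exists_eq_add_of_le hm
  have hx : 0 ≤ x := hc.le.trans hcx
  have h1 : c ^ mm ≤ x ^ mm := pow_le_pow_left₀ hc.le hcx mm
  have h2 : x ^ mm ≤ (x + h) ^ mm := pow_le_pow_left₀ hx (by linarith) mm
  calc x ^ (1 + mm) + c ^ (1 + mm - 1) * h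
      = x ^ mm * x + c ^ mm * h := by
        rw [Nat.add_sub_cancel_left]
        ring
    _ ≤ x ^ mm * x + x ^ mm * h := by nlinarith
    _ = x ^ mm * (x + h) := by ring
    _ ≤ (x + h) ^ mm * (x + h) := by nlinarith
    _ = (x + h) ^ (1 + mm) := by ring

lemma lemA (m : ℕ) (hm : 1 ≤ m) (ρ κ : ℝ) (hρ : 0 < ρ) (hκ : 0 < κ) :
    ∫⁻ η in {η : EuclideanSpace ℝ (Fin m) | ρ < ‖η‖ ∧ ‖η‖ ≤ 2 * ρ},
      ENNReal.ofReal (κ / (‖η‖ ^ 2 - ρ ^ 2)) ∂volume = ⊤ := by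
  classical
  set E := EuclideanSpace ℝ (Fin m)
  set V : ENNReal := volume (closedBall (0 : E) 1) with hVdef
  have hV0 : 0 < V := measure_closedBall_pos volume _ one_pos
  have hVfin : V ≠ ⊤ := measure_closedBall_lt_top.ne
  set g : ℕ → ℝ := fun k => ρ * (1 + (2 : ℝ)⁻¹ ^ k) with hgdef
  have ht0 : ∀ k : ℕ, (0:ℝ) < (2 : ℝ)⁻¹ ^ k := fun k => pow_pos (by norm_num) k
  have ht1 : ∀ k : ℕ, (2 : ℝ)⁻¹ ^ k ≤ 1 := fun k => pow_le_one₀ (by norm_num) (by norm_num)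
  have hg_lt : ∀ k, ρ < g k := fun k => by
    have := ht0 k; simp only [hgdef]; nlinarith
  have hg_le : ∀ k, g k ≤ 2 * ρ := fun k => by
    have := ht1 k; simp only [hgdef]; nlinarith
  have hg_anti : ∀ k l, k ≤ l → g l ≤ g k := fun k l hkl => by
    have : (2:ℝ)⁻¹ ^ l ≤ (2:ℝ)⁻¹ ^ k :=
      pow_le_pow_of_le_one (by norm_num) (by norm_num) hkl
    simp only [hgdef]; nlinarith
  have hg_pos : ∀ k, 0 < g k := fun k => hρ.trans (hg_lt k)
  set A : ℕ → Set E := fun k => closedBall (0 : E) (g k) \ closedBall 0 (g (k+1)) with hAdef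
  have hmemA : ∀ k (η : E), η ∈ A k ↔ g (k+1) < ‖η‖ ∧ ‖η‖ ≤ g k := by
    intro k η
    simp [hAdef, Set.mem_diff, mem_closedBall, dist_zero_right, not_le, and_comm]
  have hAmeas : ∀ k, MeasurableSet (A k) :=
    fun k => measurableSet_closedBall.diff measurableSet_closedBall
  have hAsub : ∀ k, A k ⊆ {η : E | ρ < ‖η‖ ∧ ‖η‖ ≤ 2 * ρ} := by
    intro k η hη
    rw [hmemA] at hη
    exact ⟨(hg_lt (k+1)).trans hη.1, hη.2.trans (hg_le k)⟩
  have hAdisj : Pairwise (Function.onFun Disjoint A) := by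
    have key : ∀ k l, k < l → Disjoint (A k) (A l) := by
      intro k l hkl
      rw [Set.disjoint_left]
      intro η hηk hηl
      rw [hmemA] at hηk hηl
      have : g l ≤ g (k+1) := hg_anti _ _ hkl
      linarith [hηk.1, hηl.2]
    intro k l hkl
    rcases lt_or_gt_of_ne hkl with h | h
    · exact key k l h
    · exact (key l k h).symm
  have hfr : Module.finrank ℝ E = m := finrank_euclideanSpace_fin
  have hcb : ∀ r : ℝ, 0 ≤ r →
      volume (closedBall (0 : E) r) = ENNReal.ofReal (r ^ m) * V := by
    intro r hr
    rw [hVdef, Measure.addHaar_closedBall' _ _ hr, hfr]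
  have hμA : ∀ k, ENNReal.ofReal (ρ ^ (m - 1) * (ρ * (2:ℝ)⁻¹ ^ k / 2)) * V ≤ volume (A k) := by
    intro k
    have hsub : closedBall (0 : E) (g (k+1)) ⊆ closedBall 0 (g k) :=
      closedBall_subset_closedBall (hg_anti k (k+1) (Nat.le_succ k))
    rw [hAdef]
    rw [measure_diff hsub measurableSet_closedBall.nullMeasurableSet
      measure_closedBall_lt_top.ne]
    rw [hcb _ (hg_pos k).le, hcb _ (hg_pos (k+1)).le, ← ENNReal.sub_mul (fun _ _ => hVfin)]
    gcongr
    rw [← ENNReal.ofReal_sub _ (pow_nonneg (hg_pos (k+1)).le m)]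
    apply ENNReal.ofReal_le_ofReal
    have hgap : g (k+1) ^ m + ρ ^ (m-1) * (ρ * (2:ℝ)⁻¹ ^ k / 2) ≤ g k ^ m := by
      have hx : ρ ≤ g (k+1) := (hg_lt (k+1)).le
      have heq : g k = g (k+1) + ρ * (2:ℝ)⁻¹ ^ k / 2 := by
        simp only [hgdef, pow_succ]
        ring
      rw [heq]
      exact aux_pow_gap m hm ρ (g (k+1)) _ hρ hx (by positivity)
    linarith
  set C : ENNReal := ENNReal.ofReal (κ * ρ ^ (m-1) / (6 * ρ)) * V with hCdef
  have hC0 : C ≠ 0 := by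
    refine mul_ne_zero ?_ hV0.ne'
    simp only [ne_eq, ENNReal.ofReal_eq_zero, not_le]
    positivity
  have hlow : ∀ k, C ≤ ∫⁻ η in A k, ENNReal.ofReal (κ / (‖η‖ ^ 2 - ρ ^ 2)) ∂volume := by
    intro k
    have hptw : ∀ η ∈ A k, ENNReal.ofReal (κ / (3 * ρ^2 * (2:ℝ)⁻¹ ^ k))
        ≤ ENNReal.ofReal (κ / (‖η‖ ^ 2 - ρ ^ 2)) := by
      intro η hη
      rw [hmemA] at hη
      apply ENNReal.ofReal_le_ofReal
      have h1 : 0 < ‖η‖ ^ 2 - ρ ^ 2 := by nlinarith [hg_lt (k+1), hη.1]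
      have h2 : ‖η‖ ^ 2 - ρ ^ 2 ≤ 3 * ρ^2 * (2:ℝ)⁻¹ ^ k := by
        have := hη.2
        have := ht0 k; have := ht1 k
        have hgk : g k ^ 2 = ρ^2 * (1 + (2:ℝ)⁻¹ ^ k)^2 := by
          simp only [hgdef]; ring
        nlinarith [hg_pos k, norm_nonneg η]
      exact div_le_div_of_nonneg_left hκ.le h1 h2
    calc C ≤ ENNReal.ofReal (κ / (3 * ρ^2 * (2:ℝ)⁻¹ ^ k)) * volume (A k) := by
          refine le_trans ?_ (mul_le_mul_right (hμA k) _)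
          rw [hCdef, ← mul_assoc, ← ENNReal.ofReal_mul (by positivity)]
          apply mul_le_mul_left
          apply ENNReal.ofReal_le_ofReal
          have h2k : (0:ℝ) < (2:ℝ)⁻¹ ^ k := ht0 k
          have hρ' : ρ ≠ 0 := hρ.ne'
          have h2k' : ((2:ℝ)⁻¹ ^ k) ≠ 0 := h2k.ne'
          have heq : κ / (3 * ρ^2 * (2:ℝ)⁻¹ ^ k) * (ρ ^ (m-1) * (ρ * (2:ℝ)⁻¹ ^ k / 2))
              = κ * ρ ^ (m-1) / (6 * ρ) := by
            field_simp
            ring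
          rw [heq]
      _ = ∫⁻ _ in A k, ENNReal.ofReal (κ / (3 * ρ^2 * (2:ℝ)⁻¹ ^ k)) ∂volume := by
          rw [setLIntegral_const]
      _ ≤ _ := setLIntegral_mono' (hAmeas k) hptw
  have hunion : ∫⁻ η in ⋃ k, A k, ENNReal.ofReal (κ / (‖η‖ ^ 2 - ρ ^ 2)) ∂volume = ⊤ := by
    rw [lintegral_iUnion hAmeas hAdisj]
    refine top_unique ?_
    calc (⊤ : ENNReal) = ∑' _ : ℕ, C := (ENNReal.tsum_const_eq_top_of_ne_zero hC0).symm
      _ ≤ _ := ENNReal.tsum_le_tsum hlow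
  refine top_unique ?_
  rw [← hunion]
  exact lintegral_mono_set (Set.iUnion_subset hAsub)

/-- Let `f` be a Schwartz function on `ℝ^(n+1)`, even in the last variable. Then the function
`ĝ(ξ,η) = c · f̂(ξ, √(‖η‖²−‖ξ‖²)) / (‖η‖^(n−1) √(‖η‖²−‖ξ‖²))` for `‖η‖ > ‖ξ‖`, `0` otherwise,
is not in `L²(ℝⁿ × ℝ^(n+1))` provided `f̂(0,0) ≠ 0`, where `c = (2π)ⁿ · 2/|Sⁿ|` and `f̂` is the Fourier transform
of `f` viewed as a function of `(ξ, r) ∈ ℝⁿ × ℝ`. -/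
theorem stmt_10 (n : ℕ) (hn : 1 ≤ n)
    (f : SchwartzMap (EuclideanSpace ℝ (Fin (n + 1))) ℝ)
    (fhat : EuclideanSpace ℝ (Fin n) → ℝ → ℂ)
    (hfhat : ∀ ξ r, fhat ξ r =
      FourierTransform.fourier (fun v => (f v : ℂ))
        ((EuclideanSpace.equiv (Fin (n + 1)) ℝ).symm
          (fun i => if h : (i : ℕ) < n then ξ ⟨i, h⟩ else r)))
    (S c : ℝ)
    (hS : S = ((n + 1 : ℕ) *
      volume (Metric.ball (0 : EuclideanSpace ℝ (Fin (n + 1))) 1)).toReal)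
    (hc : c = (2 * Real.pi) ^ n * 2 / S)
    (hf0 : fhat 0 0 ≠ 0) :
    ¬ MemLp (fun p : EuclideanSpace ℝ (Fin n) × EuclideanSpace ℝ (Fin (n + 1)) =>
      if ‖p.1‖ < ‖p.2‖ then
        (c : ℂ) * fhat p.1 (Real.sqrt (‖p.2‖ ^ 2 - ‖p.1‖ ^ 2)) /
          ((‖p.2‖ ^ (n - 1) * Real.sqrt (‖p.2‖ ^ 2 - ‖p.1‖ ^ 2) : ℝ) : ℂ)
      else 0) 2 volume := by
  intro hmem
  set F : (EuclideanSpace ℝ (Fin n)) × (EuclideanSpace ℝ (Fin (n + 1))) → ℂ := fun p =>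
      if ‖p.1‖ < ‖p.2‖ then
        (c : ℂ) * fhat p.1 (Real.sqrt (‖p.2‖ ^ 2 - ‖p.1‖ ^ 2)) /
          ((‖p.2‖ ^ (n - 1) * Real.sqrt (‖p.2‖ ^ 2 - ‖p.1‖ ^ 2) : ℝ) : ℂ)
      else 0 with hFdef
  -- positivity of c
  have hSpos : 0 < S := by
    rw [hS]
    apply ENNReal.toReal_pos
    · refine mul_ne_zero (by simp) (measure_ball_pos volume _ one_pos).ne'
    · exact ENNReal.mul_ne_top (by simp) measure_ball_lt_top.ne
  have hcpos : 0 < c := by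
    rw [hc]
    positivity
  -- continuity of fhat
  have hcont : Continuous fun q : (EuclideanSpace ℝ (Fin n)) × ℝ => fhat q.1 q.2 := by
    have hint : Integrable (fun v : (EuclideanSpace ℝ (Fin (n + 1))) => (f v : ℂ)) volume := (f.integrable).ofReal
    have h1 : Continuous (FourierTransform.fourier (fun v : (EuclideanSpace ℝ (Fin (n + 1))) => (f v : ℂ))) :=
      VectorFourier.fourierIntegral_continuous Real.continuous_fourierChar
        (L := innerₗ _) continuous_inner hint
    have h2 : Continuous fun q : (EuclideanSpace ℝ (Fin n)) × ℝ =>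
        ((EuclideanSpace.equiv (Fin (n + 1)) ℝ).symm
          (fun i => if h : (i : ℕ) < n then q.1 ⟨i, h⟩ else q.2) : (EuclideanSpace ℝ (Fin (n + 1)))) := by
      apply (EuclideanSpace.equiv (Fin (n + 1)) ℝ).symm.continuous.comp
      apply continuous_pi
      intro i
      by_cases h : (i : ℕ) < n
      · simp only [dif_pos h]
        exact ((EuclideanSpace.proj (⟨i, h⟩ : Fin n)).continuous).comp continuous_fst
      · simp only [dif_neg h]
        exact continuous_snd
    have : (fun q : (EuclideanSpace ℝ (Fin n)) × ℝ => fhat q.1 q.2) = fun q =>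
        FourierTransform.fourier (fun v : (EuclideanSpace ℝ (Fin (n + 1))) => (f v : ℂ))
          ((EuclideanSpace.equiv (Fin (n + 1)) ℝ).symm
            (fun i => if h : (i : ℕ) < n then q.1 ⟨i, h⟩ else q.2)) := by
      funext q
      exact hfhat q.1 q.2
    rw [this]
    exact h1.comp h2
  -- small neighborhood where fhat is large
  set δ : ℝ := ‖fhat 0 0‖ / 2 with hδdef
  have hδpos : 0 < δ := by
    have : 0 < ‖fhat 0 0‖ := norm_pos_iff.2 hf0
    positivity
  obtain ⟨ε, hεpos, hball⟩ := Metric.continuousAt_iff.1 (hcont.continuousAt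
    (x := ((0 : (EuclideanSpace ℝ (Fin n))), (0 : ℝ)))) δ hδpos
  have hlarge : ∀ (ξ : (EuclideanSpace ℝ (Fin n))) (r : ℝ), ‖ξ‖ < ε → |r| < ε → δ ≤ ‖fhat ξ r‖ := by
    intro ξ r h1 h2
    have hd : dist ((ξ, r) : (EuclideanSpace ℝ (Fin n)) × ℝ) (0, 0) < ε := by
      rw [Prod.dist_eq]
      apply max_lt
      · simpa [dist_zero_right] using h1
      · simpa [Real.dist_eq] using h2
    have := hball hd
    have h3 : dist (fhat ξ r) (fhat 0 0) < δ := this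
    have h4 : ‖fhat 0 0‖ - ‖fhat ξ r‖ ≤ dist (fhat ξ r) (fhat 0 0) := by
      rw [dist_comm, dist_eq_norm]
      exact (norm_sub_norm_le _ _).trans (le_refl _)
    have : ‖fhat 0 0‖ = 2 * δ := by rw [hδdef]; ring
    linarith
  set ε₀ : ℝ := ε / 4 with hε₀def
  have hε₀pos : 0 < ε₀ := by positivity
  -- measurability of F
  have hFmeas : Measurable F := by
    have hnum : Continuous fun p : (EuclideanSpace ℝ (Fin n)) × (EuclideanSpace ℝ (Fin (n + 1))) =>
        (c : ℂ) * fhat p.1 (Real.sqrt (‖p.2‖ ^ 2 - ‖p.1‖ ^ 2)) := by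
      apply continuous_const.mul
      exact hcont.comp (continuous_fst.prodMk
        ((continuous_norm.comp continuous_snd).pow 2 |>.sub
          ((continuous_norm.comp continuous_fst).pow 2)).sqrt)
    have hden : Continuous fun p : (EuclideanSpace ℝ (Fin n)) × (EuclideanSpace ℝ (Fin (n + 1))) =>
        ((‖p.2‖ ^ (n - 1) * Real.sqrt (‖p.2‖ ^ 2 - ‖p.1‖ ^ 2) : ℝ) : ℂ) := by
      apply Complex.continuous_ofReal.comp
      exact ((continuous_norm.comp continuous_snd).pow (n-1)).mul
        ((continuous_norm.comp continuous_snd).pow 2 |>.sub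
          ((continuous_norm.comp continuous_fst).pow 2)).sqrt
    exact Measurable.ite
      (measurableSet_lt (continuous_norm.comp continuous_fst).measurable
        (continuous_norm.comp continuous_snd).measurable)
      (hnum.measurable.div hden.measurable) measurable_const
  have hGmeas : Measurable fun p : (EuclideanSpace ℝ (Fin n)) × (EuclideanSpace ℝ (Fin (n + 1))) => (‖F p‖₊ : ENNReal) ^ (2 : ℝ) :=
    hFmeas.enorm.pow_const _
  -- finiteness of the squared integral
  have h2 : ∫⁻ p : (EuclideanSpace ℝ (Fin n)) × (EuclideanSpace ℝ (Fin (n + 1))), (‖F p‖₊ : ENNReal) ^ (2 : ℝ) ∂volume < ⊤ := by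
    have h := hmem.2
    rw [eLpNorm_eq_lintegral_rpow_enorm_toReal (by norm_num) (by norm_num)] at h
    simp only [ENNReal.toReal_ofNat] at h
    rw [ENNReal.rpow_lt_top_iff_of_pos (by norm_num)] at h
    exact h
  rw [Measure.volume_eq_prod, lintegral_prod _ hGmeas.aemeasurable] at h2
  have hae : ∀ᵐ ξ : (EuclideanSpace ℝ (Fin n)), (∫⁻ η : (EuclideanSpace ℝ (Fin (n + 1))), (‖F (ξ, η)‖₊ : ENNReal) ^ (2 : ℝ) ∂volume) < ⊤ :=
    ae_lt_top (Measurable.lintegral_prod_right' hGmeas) h2.ne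
  -- key divergence for small nonzero ξ
  have hkey : ∀ ξ : (EuclideanSpace ℝ (Fin n)), 0 < ‖ξ‖ → ‖ξ‖ ≤ ε₀ →
      (∫⁻ η : (EuclideanSpace ℝ (Fin (n + 1))), (‖F (ξ, η)‖₊ : ENNReal) ^ (2 : ℝ) ∂volume) = ⊤ := by
    intro ξ hρ0 hρε
    set ρ : ℝ := ‖ξ‖ with hρdef
    set κ : ℝ := c ^ 2 * δ ^ 2 / ((2 * ρ) ^ (n - 1)) ^ 2 with hκdef
    have hκpos : 0 < κ := by positivity
    have hptw : ∀ η : (EuclideanSpace ℝ (Fin (n + 1))), η ∈ {η : (EuclideanSpace ℝ (Fin (n + 1))) | ρ < ‖η‖ ∧ ‖η‖ ≤ 2 * ρ} →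
        ENNReal.ofReal (κ / (‖η‖ ^ 2 - ρ ^ 2)) ≤ (‖F (ξ, η)‖₊ : ENNReal) ^ (2 : ℝ) := by
      intro η hη
      obtain ⟨hη1, hη2⟩ := hη
      have hsq : 0 < ‖η‖ ^ 2 - ρ ^ 2 := by nlinarith
      set r : ℝ := Real.sqrt (‖η‖ ^ 2 - ρ ^ 2) with hrdef
      have hr0 : 0 < r := Real.sqrt_pos.2 hsq
      have hr2 : r ^ 2 = ‖η‖ ^ 2 - ρ ^ 2 := Real.sq_sqrt hsq.le
      have hrle : r ≤ 2 * ρ := by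
        nlinarith [hr2, hr0]
      have hδle : δ ≤ ‖fhat ξ r‖ := by
        apply hlarge
        · calc ‖ξ‖ ≤ ε₀ := hρε
            _ < ε := by rw [hε₀def]; linarith
        · rw [abs_of_pos hr0]
          calc r ≤ 2 * ρ := hrle
            _ ≤ 2 * ε₀ := by linarith
            _ < ε := by rw [hε₀def]; linarith
      have hcond : ‖(ξ, η).1‖ < ‖(ξ, η).2‖ := hη1
      have hFval : F (ξ, η) = (c : ℂ) * fhat ξ r /
          ((‖η‖ ^ (n - 1) * r : ℝ) : ℂ) := by
        simp only [hFdef, if_pos hcond]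
        rfl
      have hD : (0:ℝ) < ‖η‖ ^ (n - 1) * r := by
        have : (0:ℝ) < ‖η‖ := lt_trans hρ0 hη1
        positivity
      have hnormF : ‖F (ξ, η)‖ = c * ‖fhat ξ r‖ / (‖η‖ ^ (n - 1) * r) := by
        rw [hFval, norm_div, norm_mul, Complex.norm_real, Complex.norm_real,
          Real.norm_eq_abs, Real.norm_eq_abs, abs_of_pos hcpos, abs_of_pos hD]
      have hη0 : (0:ℝ) < ‖η‖ := lt_trans hρ0 hη1
      have hreal : κ / (‖η‖ ^ 2 - ρ ^ 2) ≤ ‖F (ξ, η)‖ ^ 2 := by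
        rw [hnormF, div_pow, mul_pow, mul_pow, hr2]
        rw [hκdef, div_div, div_le_div_iff₀ (by positivity) (by positivity)]
        have hb1 : δ ^ 2 ≤ ‖fhat ξ r‖ ^ 2 := by nlinarith [norm_nonneg (fhat ξ r)]
        have hb2 : (‖η‖ ^ (n-1)) ^ 2 ≤ ((2*ρ) ^ (n-1)) ^ 2 := by
          have h' : ‖η‖ ^ (n-1) ≤ (2*ρ) ^ (n-1) := pow_le_pow_left₀ (norm_nonneg η) hη2 _
          nlinarith [pow_nonneg (norm_nonneg η) (n-1)]
        calc c ^ 2 * δ ^ 2 * ((‖η‖ ^ (n - 1)) ^ 2 * (‖η‖ ^ 2 - ρ ^ 2))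
            ≤ c ^ 2 * ‖fhat ξ r‖ ^ 2 * (((2*ρ) ^ (n - 1)) ^ 2 * (‖η‖ ^ 2 - ρ ^ 2)) := by
              have hc2 : (0:ℝ) ≤ c ^ 2 := sq_nonneg c
              have h1 : c ^ 2 * δ ^ 2 ≤ c ^ 2 * ‖fhat ξ r‖ ^ 2 := by nlinarith
              have h2 : (‖η‖ ^ (n - 1)) ^ 2 * (‖η‖ ^ 2 - ρ ^ 2)
                  ≤ ((2*ρ) ^ (n - 1)) ^ 2 * (‖η‖ ^ 2 - ρ ^ 2) := by nlinarith
              have h3 : (0:ℝ) ≤ (‖η‖ ^ (n - 1)) ^ 2 * (‖η‖ ^ 2 - ρ ^ 2) := by positivity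
              have h4 : (0:ℝ) ≤ c ^ 2 * ‖fhat ξ r‖ ^ 2 := by positivity
              exact mul_le_mul h1 h2 h3 h4
          _ = c ^ 2 * ‖fhat ξ r‖ ^ 2 * (((2 * ρ) ^ (n - 1)) ^ 2 * (‖η‖ ^ 2 - ρ ^ 2)) := rfl
      calc ENNReal.ofReal (κ / (‖η‖ ^ 2 - ρ ^ 2))
          ≤ ENNReal.ofReal (‖F (ξ, η)‖ ^ 2) := ENNReal.ofReal_le_ofReal hreal
        _ = (‖F (ξ, η)‖₊ : ENNReal) ^ (2 : ℝ) := by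
            rw [← enorm_eq_nnnorm, ← ofReal_norm, ENNReal.ofReal_pow (norm_nonneg _),
              ← ENNReal.rpow_natCast]
            norm_num
    have hSmeas : MeasurableSet {η : (EuclideanSpace ℝ (Fin (n + 1))) | ρ < ‖η‖ ∧ ‖η‖ ≤ 2 * ρ} := by
      apply MeasurableSet.inter
      · exact measurableSet_lt measurable_const continuous_norm.measurable
      · exact measurableSet_le continuous_norm.measurable measurable_const
    refine top_unique ?_
    calc (⊤ : ENNReal) = ∫⁻ η in {η : (EuclideanSpace ℝ (Fin (n + 1))) | ρ < ‖η‖ ∧ ‖η‖ ≤ 2 * ρ},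
          ENNReal.ofReal (κ / (‖η‖ ^ 2 - ρ ^ 2)) ∂volume :=
            (lemA (n+1) (by omega) ρ κ hρ0 hκpos).symm
      _ ≤ ∫⁻ η in {η : (EuclideanSpace ℝ (Fin (n + 1))) | ρ < ‖η‖ ∧ ‖η‖ ≤ 2 * ρ},
            (‖F (ξ, η)‖₊ : ENNReal) ^ (2 : ℝ) ∂volume := setLIntegral_mono' hSmeas hptw
      _ ≤ _ := setLIntegral_le_lintegral _ _
  -- the bad set has positive measure: contradiction
  set T : Set (EuclideanSpace ℝ (Fin n)) := {ξ : (EuclideanSpace ℝ (Fin n)) | ¬ (∫⁻ η : (EuclideanSpace ℝ (Fin (n + 1))), (‖F (ξ, η)‖₊ : ENNReal) ^ (2 : ℝ) ∂volume) < ⊤}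
    with hTdef
  have hT0 : volume T = 0 := hae
  set O : Set (EuclideanSpace ℝ (Fin n)) := {ξ : (EuclideanSpace ℝ (Fin n)) | ε₀ / 2 < ‖ξ‖ ∧ ‖ξ‖ < ε₀} with hOdef
  have hOopen : IsOpen O := by
    apply IsOpen.inter
    · exact isOpen_lt continuous_const continuous_norm
    · exact isOpen_lt continuous_norm continuous_const
  have hOne : O.Nonempty := by
    refine ⟨EuclideanSpace.single (⟨0, hn⟩ : Fin n) (3 * ε₀ / 4), ?_, ?_⟩
    · rw [EuclideanSpace.norm_single]
      rw [Real.norm_eq_abs, abs_of_pos (by positivity)]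
      linarith
    · rw [EuclideanSpace.norm_single]
      rw [Real.norm_eq_abs, abs_of_pos (by positivity)]
      linarith
  have hOsub : O ⊆ T := by
    intro ξ hξ
    obtain ⟨h1, h2⟩ := hξ
    rw [hTdef]
    simp only [Set.mem_setOf_eq, not_lt, top_le_iff]
    exact hkey ξ (by linarith) h2.le
  have : volume O = 0 := le_antisymm (hT0 ▸ measure_mono hOsub) (by positivity)
  exact (hOopen.measure_pos volume hOne).ne' this
end

section
/- Let f : ℝ² → ℝ be a smooth compactly supported even function (f(x,−y)=f(x,y)), and define g(x,r) = (1/(2π)) ∫_{S¹} f(x + r·ξ₁, r·ξ₂) dσ(ξ) for x ∈ ℝ, r ≥ 0. If f ≥ 0 and f(x₀,y₀) > 0 for some point (x₀,y₀), then the backprojection integral ∫_ℝ g(z, √((z−x₀)² + y₀²)) dz diverges to +∞. -/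
open MeasureTheory

private lemma lip_cos (a b : ℝ) : |Real.cos a - Real.cos b| ≤ |a - b| := by
  rw [Real.cos_sub_cos, abs_mul, abs_mul, abs_neg]
  have h1 : |Real.sin ((a - b) / 2)| ≤ |a - b| / 2 := by
    simpa [abs_div] using Real.abs_sin_le_abs (x := (a - b) / 2)
  have h2 : |Real.sin ((a + b) / 2)| ≤ 1 := Real.abs_sin_le_one _
  have h3 : (0:ℝ) ≤ |Real.sin ((a - b) / 2)| := abs_nonneg _
  have h4 : (0:ℝ) ≤ |Real.sin ((a + b) / 2)| := abs_nonneg _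
  have : |(2:ℝ)| = 2 := by norm_num
  rw [this]
  nlinarith

private lemma lip_sin (a b : ℝ) : |Real.sin a - Real.sin b| ≤ |a - b| := by
  rw [Real.sin_sub_sin, abs_mul, abs_mul]
  have h1 : |Real.sin ((a - b) / 2)| ≤ |a - b| / 2 := by
    simpa [abs_div] using Real.abs_sin_le_abs (x := (a - b) / 2)
  have h2 : |Real.cos ((a + b) / 2)| ≤ 1 := Real.abs_cos_le_one _
  have h3 : (0:ℝ) ≤ |Real.sin ((a - b) / 2)| := abs_nonneg _
  have h4 : (0:ℝ) ≤ |Real.cos ((a + b) / 2)| := abs_nonneg _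
  have : |(2:ℝ)| = 2 := by norm_num
  rw [this]
  nlinarith

/-- Let `f : ℝ² → ℝ` be smooth, compactly supported and even in the second variable, and let
`g(x,r) = (1/(2π)) ∫₀^{2π} f(x + r cos θ, r sin θ) dθ` be its circular mean. If `f ≥ 0` and
`f(x₀,y₀) > 0` at some point, then the backprojection integral
`∫_ℝ g(z, √((z−x₀)² + y₀²)) dz` diverges to `+∞`. -/
theorem stmt_11 (f : ℝ × ℝ → ℝ) (hsmooth : ContDiff ℝ (⊤ : ℕ∞) f) (hsupp : HasCompactSupport f)
    (heven : ∀ x y, f (x, -y) = f (x, y))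
    (g : ℝ → ℝ → ℝ)
    (hg : ∀ x r, g x r =
      (1 / (2 * Real.pi)) * ∫ θ in (0 : ℝ)..(2 * Real.pi),
        f (x + r * Real.cos θ, r * Real.sin θ))
    (hnonneg : ∀ p, 0 ≤ f p) (x₀ y₀ : ℝ) (hpos : 0 < f (x₀, y₀)) :
    ∫⁻ z : ℝ, ENNReal.ofReal (g z (Real.sqrt ((z - x₀) ^ 2 + y₀ ^ 2))) = ⊤ := by
  have hπ : 0 < Real.pi := Real.pi_pos
  have hcontf : Continuous f := hsmooth.continuous
  -- move to the point (x₀, |y₀|)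
  set y₁ : ℝ := |y₀| with hy₁
  have hy₁nn : 0 ≤ y₁ := abs_nonneg _
  have hy₁sq : y₁ ^ 2 = y₀ ^ 2 := sq_abs _
  have hf1 : 0 < f (x₀, y₁) := by
    rcases abs_cases y₀ with ⟨h, _⟩ | ⟨h, _⟩
    · rw [hy₁, h]; exact hpos
    · rw [hy₁, h, heven]; exact hpos
  -- continuity: f > c on a ball of radius 2ε' around (x₀,y₁)
  set c : ℝ := f (x₀, y₁) / 2 with hc
  have hcpos : 0 < c := by positivity
  have hmem : f ⁻¹' Set.Ioi c ∈ nhds (x₀, y₁) :=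
    hcontf.continuousAt.preimage_mem_nhds (isOpen_Ioi.mem_nhds (by
      simp only [Set.mem_Ioi, hc]; linarith))
  obtain ⟨ε, hεpos, hball⟩ := Metric.mem_nhds_iff.1 hmem
  set ε' : ℝ := ε / 2 with hε'
  have hε'pos : 0 < ε' := by positivity
  have hball' : ∀ p : ℝ × ℝ, dist p (x₀, y₁) ≤ ε' → c ≤ f p := by
    intro p hp
    have : p ∈ Metric.ball (x₀, y₁) ε := by
      simp only [Metric.mem_ball]; linarith
    exact le_of_lt (hball this)
  -- threshold
  set M : ℝ := max (x₀ + ε' + 1) (max (|x₀| + |y₀| + 1) 1) with hM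
  have hM1 : (1:ℝ) ≤ M := le_trans (le_max_right _ _) (le_max_right _ _)
  have hMpos : 0 < M := lt_of_lt_of_le one_pos hM1
  set K : ℝ := c * ε' / (4 * Real.pi) with hK
  have hKpos : 0 < K := by positivity
  -- pointwise lower bound on Ioi M
  have key : ∀ z ∈ Set.Ioi M, ENNReal.ofReal (K * z⁻¹) ≤
      ENNReal.ofReal (g z (Real.sqrt ((z - x₀) ^ 2 + y₀ ^ 2))) := by
    intro z hz
    have hzM : M < z := hz
    have hz1 : (1:ℝ) < z := lt_of_le_of_lt hM1 hzM
    have hzx : x₀ + ε' + 1 < z := lt_of_le_of_lt (le_trans (le_max_left _ _) (le_refl M)) hzM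
    have hzxy : |x₀| + |y₀| + 1 < z :=
      lt_of_le_of_lt (le_trans (le_max_left _ _) (le_max_right _ _)) hzM
    set R : ℝ := Real.sqrt ((z - x₀) ^ 2 + y₀ ^ 2) with hR
    have hRsq : R ^ 2 = (z - x₀) ^ 2 + y₀ ^ 2 := Real.sq_sqrt (by positivity)
    have hRnn : 0 ≤ R := Real.sqrt_nonneg _
    have hRz : z - x₀ ≤ R := by
      have h1 : z - x₀ = Real.sqrt ((z - x₀) ^ 2) := (Real.sqrt_sq (by linarith)).symm
      rw [h1]
      exact Real.sqrt_le_sqrt (by nlinarith [sq_nonneg y₀])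
    have hε'R : ε' ≤ R := by linarith
    have hRpos : 0 < R := by linarith
    have hRle : R ≤ 2 * z := by
      have h2 : R = Real.sqrt (R ^ 2) := (Real.sqrt_sq hRnn).symm
      rw [h2, hRsq]
      have h3 : (z - x₀) ^ 2 + y₀ ^ 2 ≤ (2 * z) ^ 2 := by
        nlinarith [le_abs_self x₀, neg_abs_le x₀, le_abs_self y₀, neg_abs_le y₀,
          abs_nonneg x₀, abs_nonneg y₀, sq_abs y₀]
      calc Real.sqrt ((z - x₀) ^ 2 + y₀ ^ 2) ≤ Real.sqrt ((2 * z) ^ 2) :=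
            Real.sqrt_le_sqrt h3
        _ = 2 * z := Real.sqrt_sq (by linarith)
    -- the angle
    set t : ℝ := (x₀ - z) / R with ht
    have htabs : |x₀ - z| ≤ R := by
      rw [abs_sub_comm]
      calc |z - x₀| = z - x₀ := abs_of_nonneg (by linarith)
        _ ≤ R := hRz
    have ht1 : -1 ≤ t := by
      rw [ht, le_div_iff₀ hRpos]
      linarith [neg_abs_le (x₀ - z), htabs]
    have ht2 : t ≤ 1 := by
      rw [ht, div_le_one hRpos]
      linarith [le_abs_self (x₀ - z), htabs]
    set θ₀ : ℝ := Real.arccos t with hθ₀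
    have hθ₀nn : 0 ≤ θ₀ := Real.arccos_nonneg _
    have hθ₀pi : θ₀ ≤ Real.pi := Real.arccos_le_pi _
    have hcosθ₀ : Real.cos θ₀ = t := Real.cos_arccos ht1 ht2
    have hsinθ₀ : Real.sin θ₀ = y₁ / R := by
      rw [hθ₀, Real.sin_arccos]
      have hR2ne : (R : ℝ) ^ 2 ≠ 0 := by positivity
      have e1 : (y₁ / R) ^ 2 = y₀ ^ 2 / R ^ 2 := by rw [div_pow, hy₁sq]
      have e2 : R ^ 2 - (x₀ - z) ^ 2 = y₀ ^ 2 := by linear_combination hRsq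
      have h1 : 1 - t ^ 2 = (y₁ / R) ^ 2 := by
        rw [e1, ht, div_pow, ← e2, sub_div, div_self hR2ne]
      rw [h1, Real.sqrt_sq (by positivity)]
    have hRne : (R : ℝ) ≠ 0 := ne_of_gt hRpos
    have hpt1 : z + R * Real.cos θ₀ = x₀ := by
      rw [hcosθ₀, ht, ← mul_div_assoc, mul_div_cancel_left₀ _ hRne]
      ring
    have hpt2 : R * Real.sin θ₀ = y₁ := by
      rw [hsinθ₀, ← mul_div_assoc, mul_div_cancel_left₀ _ hRne]
    set δ : ℝ := ε' / R with hδ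
    have hδpos : 0 < δ := by positivity
    have hδ1 : δ ≤ 1 := by
      rw [hδ, div_le_one hRpos]; exact hε'R
    have hθδ : θ₀ + δ ≤ 2 * Real.pi := by
      have := Real.pi_gt_three
      linarith
    -- points on the small arc are in the ball
    have harc : ∀ θ ∈ Set.Icc θ₀ (θ₀ + δ), c ≤ f (z + R * Real.cos θ, R * Real.sin θ) := by
      intro θ hθ
      apply hball'
      have hdθ : |θ - θ₀| ≤ δ := by
        rw [abs_of_nonneg (by linarith [hθ.1])]
        linarith [hθ.2]
      have h1 : |z + R * Real.cos θ - x₀| ≤ ε' := by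
        have : z + R * Real.cos θ - x₀ = R * (Real.cos θ - Real.cos θ₀) := by
          rw [← hpt1]; ring
        rw [this, abs_mul, abs_of_nonneg hRnn]
        calc R * |Real.cos θ - Real.cos θ₀| ≤ R * |θ - θ₀| :=
              mul_le_mul_of_nonneg_left (lip_cos θ θ₀) hRnn
          _ ≤ R * δ := mul_le_mul_of_nonneg_left hdθ hRnn
          _ = ε' := by rw [hδ, ← mul_div_assoc, mul_div_cancel_left₀ _ hRne]
      have h2 : |R * Real.sin θ - y₁| ≤ ε' := by
        have : R * Real.sin θ - y₁ = R * (Real.sin θ - Real.sin θ₀) := by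
          rw [← hpt2]; ring
        rw [this, abs_mul, abs_of_nonneg hRnn]
        calc R * |Real.sin θ - Real.sin θ₀| ≤ R * |θ - θ₀| :=
              mul_le_mul_of_nonneg_left (lip_sin θ θ₀) hRnn
          _ ≤ R * δ := mul_le_mul_of_nonneg_left hdθ hRnn
          _ = ε' := by rw [hδ]; field_simp
      rw [Prod.dist_eq]
      simp only [Real.dist_eq]
      exact max_le h1 h2
    -- lower bound for the circular mean
    have hcont2 : Continuous fun θ : ℝ => f (z + R * Real.cos θ, R * Real.sin θ) := by
      apply hcontf.comp
      exact (continuous_const.add (continuous_const.mul Real.continuous_cos)).prodMk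
        (continuous_const.mul Real.continuous_sin)
    have hI1 : δ * c ≤ ∫ θ in θ₀..(θ₀ + δ), f (z + R * Real.cos θ, R * Real.sin θ) := by
      calc δ * c = ∫ _ in θ₀..(θ₀ + δ), c := by
            rw [intervalIntegral.integral_const, smul_eq_mul]; ring
        _ ≤ ∫ θ in θ₀..(θ₀ + δ), f (z + R * Real.cos θ, R * Real.sin θ) :=
            intervalIntegral.integral_mono_on (by linarith : θ₀ ≤ θ₀ + δ)
              (intervalIntegrable_const (μ := volume) (c := c))
              (hcont2.intervalIntegrable _ _) harc
    have hI2 : (∫ θ in θ₀..(θ₀ + δ), f (z + R * Real.cos θ, R * Real.sin θ)) ≤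
        ∫ θ in (0:ℝ)..(2 * Real.pi), f (z + R * Real.cos θ, R * Real.sin θ) :=
      intervalIntegral.integral_mono_interval hθ₀nn (by linarith) hθδ
        (Filter.Eventually.of_forall fun θ => hnonneg _)
        (hcont2.intervalIntegrable _ _)
    have hgz : K * z⁻¹ ≤ g z R := by
      rw [hg]
      have h1 : K * z⁻¹ ≤ 1 / (2 * Real.pi) * (δ * c) := by
        have hδlb : ε' / (2 * z) ≤ δ := by
          rw [hδ]
          exact div_le_div_of_nonneg_left (le_of_lt hε'pos) hRpos hRle
        have hzne : z ≠ 0 := by linarith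
        have hπne : Real.pi ≠ 0 := ne_of_gt hπ
        have h2 : K * z⁻¹ = 1 / (2 * Real.pi) * (ε' / (2 * z) * c) := by
          rw [hK]
          field_simp
          ring
        rw [h2]
        have : ε' / (2 * z) * c ≤ δ * c := mul_le_mul_of_nonneg_right hδlb (le_of_lt hcpos)
        have hp : (0:ℝ) ≤ 1 / (2 * Real.pi) := by positivity
        exact mul_le_mul_of_nonneg_left this hp
      calc K * z⁻¹ ≤ 1 / (2 * Real.pi) * (δ * c) := h1
        _ ≤ 1 / (2 * Real.pi) * ∫ θ in (0:ℝ)..(2 * Real.pi),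
              f (z + R * Real.cos θ, R * Real.sin θ) :=
            mul_le_mul_of_nonneg_left (le_trans hI1 hI2) (by positivity)
    exact ENNReal.ofReal_le_ofReal hgz
  -- the comparison integral diverges
  have hdiv : ∫⁻ z in Set.Ioi M, ENNReal.ofReal (K * z⁻¹) = ⊤ := by
    by_contra hne
    have hlt : ∫⁻ z in Set.Ioi M, ENNReal.ofReal (K * z⁻¹) < ⊤ := lt_top_iff_ne_top.2 hne
    have hnn : 0 ≤ᵐ[volume.restrict (Set.Ioi M)] fun z : ℝ => K * z⁻¹ := by
      refine (ae_restrict_iff' measurableSet_Ioi).2 (Filter.Eventually.of_forall fun x hx => ?_)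
      have : (0:ℝ) < x := lt_trans hMpos hx
      positivity
    have hint : IntegrableOn (fun z : ℝ => K * z⁻¹) (Set.Ioi M) := by
      refine ⟨(measurable_const.mul measurable_inv).aestronglyMeasurable, ?_⟩
      exact (hasFiniteIntegral_iff_ofReal hnn).2 hlt
    have hint2 : IntegrableOn (fun z : ℝ => z⁻¹) (Set.Ioi M) := by
      have := hint.const_mul K⁻¹
      exact (by simpa [← mul_assoc, inv_mul_cancel₀ (ne_of_gt hKpos)] using this :
        Integrable (fun z : ℝ => z⁻¹) (volume.restrict (Set.Ioi M)))
    have hint3 : IntegrableOn (fun z : ℝ => z ^ (-1 : ℝ)) (Set.Ioi M) := by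
      refine hint2.congr_fun (fun x hx => ?_) measurableSet_Ioi
      exact (Real.rpow_neg_one x).symm
    rw [integrableOn_Ioi_rpow_iff hMpos] at hint3
    linarith
  refine le_antisymm le_top ?_
  calc (⊤ : ENNReal) = ∫⁻ z in Set.Ioi M, ENNReal.ofReal (K * z⁻¹) := hdiv.symm
    _ ≤ ∫⁻ z in Set.Ioi M,
          ENNReal.ofReal (g z (Real.sqrt ((z - x₀) ^ 2 + y₀ ^ 2))) :=
        setLIntegral_mono' measurableSet_Ioi key
    _ ≤ ∫⁻ z : ℝ, ENNReal.ofReal (g z (Real.sqrt ((z - x₀) ^ 2 + y₀ ^ 2))) :=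
        setLIntegral_le_lintegral _ _
end

section
/- Let f : ℝ^(n+1) → ℝ be smooth and compactly supported, with ‖∇f‖ ≤ M everywhere and supp f of diameter D. Let g = Rf be its spherical mean. Then for all x, y, |∂/∂y [g(z, √(‖x−z‖² + y²))]| ≤ M·D·|y|/(√(‖x−z‖²+y²))^(n+1) · (surface measure factor), and consequently the integral (R*_∂ g)(x,y) := ∫_{ℝⁿ} ∂/∂y g(z, √(‖x−z‖² + y²)) dz converges absolutely. -/
open MeasureTheory Metric Set Module Filter
open scoped Pointwise ENNReal

section CapBound
variable {n : ℕ}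
local notation "V" => EuclideanSpace ℝ (Fin (n+1))

lemma aux_deriv_even {F : ℝ → ℝ} (h : ∀ t, F (-t) = F t) : deriv F 0 = 0 := by
  have h1 := deriv_comp_neg F 0
  rw [neg_zero] at h1
  have h2 : (fun t => F (-t)) = F := funext h
  rw [h2] at h1
  linarith

lemma aux_cap_bound {K : Set (EuclideanSpace ℝ (Fin (n+1)))} (hK : IsCompact K)
    {D ρ : ℝ} (hdiam : Metric.diam K ≤ D) (hD0 : 0 < D) (hρD : D ≤ ρ)
    (Z : EuclideanSpace ℝ (Fin (n+1))) :
    ((volume : Measure V).toSphere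
        {v : Metric.sphere (0 : V) 1 | Z + ρ • (v : V) ∈ K}).toReal ≤
      ((n+1) * 3 * 2^(n+1) * (D/ρ)^n) *
        ((volume : Measure V) (Metric.ball 0 1)).toReal := by
  have hρ0 : (0:ℝ) < ρ := hD0.trans_le hρD
  set A : Set (Metric.sphere (0 : V) 1) := {v | Z + ρ • (v : V) ∈ K} with hA
  have hAm : MeasurableSet A := by
    have h1 : A = (fun v : Metric.sphere (0 : V) 1 => Z + ρ • (v : V)) ⁻¹' K := rfl
    rw [h1]
    exact (hK.isClosed.preimage
      (continuous_const.add (continuous_subtype_val.const_smul ρ))).measurableSet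
  have hκfin : ((volume : Measure V) (Metric.ball 0 1)) ≠ ⊤ := measure_ball_lt_top.ne
  have hκ0 : (0:ℝ) ≤ ((volume : Measure V) (Metric.ball 0 1)).toReal := ENNReal.toReal_nonneg
  rcases A.eq_empty_or_nonempty with hAe | ⟨v₀, hv₀⟩
  · rw [hAe]
    simp only [measure_empty, ENNReal.toReal_zero]
    positivity
  set r : ℝ := D / ρ with hr
  have hr0 : 0 < r := div_pos hD0 hρ0
  have hr1 : r ≤ 1 := (div_le_one hρ0).2 hρD
  set N : ℕ := Nat.ceil (ρ / D) with hN
  have hcover : Ioo (0:ℝ) 1 • (Subtype.val '' A) ⊆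
      ⋃ j ∈ Finset.range (N+1), closedBall (((j:ℝ) * r) • (v₀ : V)) (2*r) := by
    rintro x hx
    rw [Set.mem_smul] at hx
    obtain ⟨t, ht, w, hw, rfl⟩ := hx
    obtain ⟨v, hvA, rfl⟩ := hw
    have ht0 : 0 < t := ht.1
    have ht1 : t < 1 := ht.2
    set j : ℕ := Nat.floor (t / r) with hj
    have hjN : j ∈ Finset.range (N+1) := by
      refine Finset.mem_range.2 (Nat.lt_succ_of_le ?_)
      calc j ≤ Nat.ceil (t / r) := Nat.floor_le_ceil _
        _ ≤ N := Nat.ceil_le_ceil (by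
            rw [hr, div_div_eq_mul_div]
            gcongr
            nlinarith)
    refine Set.mem_biUnion hjN ?_
    have hnv : ‖(v₀ : V)‖ = 1 := mem_sphere_zero_iff_norm.1 v₀.2
    have hvv : dist (v : V) (v₀ : V) ≤ D / ρ := by
      have h1 : dist (Z + ρ • (v : V)) (Z + ρ • (v₀ : V)) ≤ D :=
        le_trans (Metric.dist_le_diam_of_mem hK.isBounded hvA hv₀) hdiam
      rw [dist_add_left, dist_smul₀, Real.norm_eq_abs, abs_of_pos hρ0] at h1
      rw [le_div_iff₀ hρ0, mul_comm]
      exact h1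
    have hd1 : dist (t • (v : V)) (t • (v₀ : V)) ≤ r := by
      have heq : dist (t • (v : V)) (t • (v₀ : V)) = ‖t‖ * dist (v : V) (v₀ : V) :=
        dist_smul₀ _ _ _
      rw [heq, Real.norm_eq_abs, abs_of_pos ht0, hr]
      have := mul_le_mul ht1.le hvv dist_nonneg zero_le_one
      simpa using this
    have hd2 : dist (t • (v₀ : V)) (((j:ℝ) * r) • (v₀ : V)) ≤ r := by
      rw [dist_eq_norm, ← sub_smul, norm_smul, hnv, mul_one, Real.norm_eq_abs]
      have h1 : (j:ℝ) * r ≤ t := by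
        have h0 := Nat.floor_le (le_of_lt (div_pos ht0 hr0))
        calc ((j:ℕ):ℝ) * r ≤ (t/r) * r := by
              exact mul_le_mul_of_nonneg_right h0 hr0.le
          _ = t := div_mul_cancel₀ _ hr0.ne'
      have h3 : t / r < (j:ℝ) + 1 := by exact_mod_cast Nat.lt_floor_add_one (t/r)
      have h4 : t < ((j:ℝ) + 1) * r := by
        calc t = (t/r) * r := (div_mul_cancel₀ _ hr0.ne').symm
          _ < ((j:ℝ)+1) * r := mul_lt_mul_of_pos_right h3 hr0
      rw [abs_of_nonneg (by linarith)]
      nlinarith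
    rw [Metric.mem_closedBall]
    calc dist (t • (v : V)) (((j:ℝ) * r) • (v₀ : V))
        ≤ dist (t • (v : V)) (t • (v₀ : V)) + dist (t • (v₀ : V)) (((j:ℝ) * r) • (v₀ : V)) :=
          dist_triangle _ _ _
      _ ≤ r + r := add_le_add hd1 hd2
      _ = 2*r := by ring
  have hvol : (volume : Measure V) (Ioo (0:ℝ) 1 • (Subtype.val '' A)) ≤
      ENNReal.ofReal (((N:ℝ)+1) * (2*r)^(n+1)) * (volume : Measure V) (Metric.ball 0 1) := by
    calc (volume : Measure V) (Ioo (0:ℝ) 1 • (Subtype.val '' A))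
        ≤ (volume : Measure V) (⋃ j ∈ Finset.range (N+1),
            closedBall (((j:ℝ) * r) • (v₀ : V)) (2*r)) := measure_mono hcover
      _ ≤ ∑ j ∈ Finset.range (N+1),
            (volume : Measure V) (closedBall (((j:ℝ) * r) • (v₀ : V)) (2*r)) :=
          measure_biUnion_finset_le _ _
      _ = ∑ j ∈ Finset.range (N+1), ENNReal.ofReal ((2*r)^(finrank ℝ V)) *
            (volume : Measure V) (Metric.ball 0 1) := by
          refine Finset.sum_congr rfl fun j _ => ?_
          exact Measure.addHaar_closedBall _ _ (by positivity)
      _ = (N+1 : ℕ) * (ENNReal.ofReal ((2*r)^(n+1)) * (volume : Measure V) (Metric.ball 0 1)) := by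
          rw [Finset.sum_const, Finset.card_range, finrank_euclideanSpace_fin, nsmul_eq_mul]
      _ = ENNReal.ofReal (((N:ℝ)+1) * (2*r)^(n+1)) * (volume : Measure V) (Metric.ball 0 1) := by
          rw [ENNReal.ofReal_mul (by positivity), ← mul_assoc]
          congr 1
          rw [← ENNReal.ofReal_natCast (N+1)]
          congr 1
          push_cast
          ring
  have hsphere : (volume : Measure V).toSphere A =
      (n+1 : ℕ) * (volume : Measure V) (Ioo (0:ℝ) 1 • (Subtype.val '' A)) := by
    rw [Measure.toSphere_apply' _ hAm, finrank_euclideanSpace_fin]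
  have hfinal : (volume : Measure V).toSphere A ≤
      ENNReal.ofReal (((n:ℝ)+1) * (((N:ℝ)+1) * (2*r)^(n+1))) * (volume : Measure V) (Metric.ball 0 1) := by
    rw [hsphere]
    calc ((n+1:ℕ) : ℝ≥0∞) * (volume : Measure V) (Ioo (0:ℝ) 1 • (Subtype.val '' A))
        ≤ ((n+1:ℕ) : ℝ≥0∞) * (ENNReal.ofReal (((N:ℝ)+1) * (2*r)^(n+1)) *
            (volume : Measure V) (Metric.ball 0 1)) := mul_le_mul_right hvol _
      _ = ENNReal.ofReal (((n:ℝ)+1) * (((N:ℝ)+1) * (2*r)^(n+1))) *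
            (volume : Measure V) (Metric.ball 0 1) := by
          rw [← mul_assoc]
          congr 1
          rw [← ENNReal.ofReal_natCast (n+1), ← ENNReal.ofReal_mul (by positivity)]
          congr 1
          push_cast
          ring
  have htoReal : ((volume : Measure V).toSphere A).toReal ≤
      (((n:ℝ)+1) * (((N:ℝ)+1) * (2*r)^(n+1))) * ((volume : Measure V) (Metric.ball 0 1)).toReal := by
    have h1 := ENNReal.toReal_mono (ENNReal.mul_ne_top ENNReal.ofReal_ne_top hκfin) hfinal
    rwa [ENNReal.toReal_mul, ENNReal.toReal_ofReal (by positivity)] at h1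
  refine htoReal.trans ?_
  apply mul_le_mul_of_nonneg_right _ hκ0
  have hNb : ((N:ℝ)+1) ≤ 3 / r := by
    have h1 : (N:ℝ) < ρ/D + 1 := Nat.ceil_lt_add_one (by positivity)
    have h2 : ρ / D = 1 / r := by rw [hr, one_div_div]
    have h3 : (1:ℝ) ≤ 1/r := by
      rw [le_div_iff₀ hr0]; simpa using hr1
    rw [h2] at h1
    have h5 : (N:ℝ) + 1 < 1/r + 2 := by linarith
    refine h5.le.trans ?_
    calc 1/r + 2 ≤ 1/r + 2 * (1/r) := by linarith
      _ = 3 / r := by ring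
  calc ((n:ℝ)+1) * (((N:ℝ)+1) * (2*r)^(n+1))
      ≤ ((n:ℝ)+1) * ((3/r) * (2^(n+1) * r^(n+1))) := by
        apply mul_le_mul_of_nonneg_left _ (by positivity)
        rw [mul_pow]
        apply mul_le_mul_of_nonneg_right hNb (by positivity)
    _ = ((n:ℝ)+1) * 3 * 2^(n+1) * r^n := by
        field_simp
        ring


end CapBound

set_option maxHeartbeats 1000000 in
/-- Let `f : ℝ^(n+1) → ℝ` be smooth and compactly supported, with `‖∇f‖ ≤ M` everywhere and
support of diameter at most `D`, and let `g = Rf` be its spherical mean. Then (up to a surface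
measure factor `C`) for all `x, y, z`,
`|∂/∂y g(z, √(‖x−z‖² + y²))| ≤ C·M·D·|y|/(√(‖x−z‖²+y²))^(n+1)`, and consequently the
modified backprojection integral `(R*_∂ g)(x,y) = ∫_{ℝⁿ} ∂/∂y g(z, √(‖x−z‖² + y²)) dz`
converges absolutely. -/
theorem stmt_13 (n : ℕ) (hn : 1 ≤ n)
    (f : EuclideanSpace ℝ (Fin (n + 1)) → ℝ)
    (hsmooth : ContDiff ℝ (⊤ : ℕ∞) f) (hsupp : HasCompactSupport f)
    (M D : ℝ) (hM : ∀ v, ‖fderiv ℝ f v‖ ≤ M) (hD : Metric.diam (tsupport f) ≤ D)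
    (S : ℝ)
    (hS : S = ((volume : Measure (EuclideanSpace ℝ (Fin (n + 1)))).toSphere Set.univ).toReal)
    (g : EuclideanSpace ℝ (Fin n) → ℝ → ℝ)
    (hg : ∀ x r, g x r = (1 / S) *
      ∫ v : Metric.sphere (0 : EuclideanSpace ℝ (Fin (n + 1))) 1,
        f ((EuclideanSpace.equiv (Fin (n + 1)) ℝ).symm
          (fun i => if h : (i : ℕ) < n then x ⟨i, h⟩ + r * (v : EuclideanSpace ℝ (Fin (n + 1))) i
            else r * (v : EuclideanSpace ℝ (Fin (n + 1))) i))
        ∂((volume : Measure (EuclideanSpace ℝ (Fin (n + 1)))).toSphere)) :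
    ∃ C : ℝ, 0 ≤ C ∧
      (∀ (x z : EuclideanSpace ℝ (Fin n)) (y : ℝ),
        |deriv (fun t : ℝ => g z (Real.sqrt (‖x - z‖ ^ 2 + t ^ 2))) y| ≤
          C * M * D * |y| / (Real.sqrt (‖x - z‖ ^ 2 + y ^ 2)) ^ (n + 1)) ∧
      (∀ (x : EuclideanSpace ℝ (Fin n)) (y : ℝ),
        Integrable (fun z : EuclideanSpace ℝ (Fin n) =>
          deriv (fun t : ℝ => g z (Real.sqrt (‖x - z‖ ^ 2 + t ^ 2))) y)) := by
  classical
  have hM0 : 0 ≤ M := le_trans (norm_nonneg _) (hM 0)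
  have hD0' : 0 ≤ D := le_trans Metric.diam_nonneg hD
  rcases eq_or_lt_of_le hD0' with hDeq | hDpos
  · -- degenerate case D = 0 : f vanishes identically
    have hdiam0 : Metric.diam (tsupport f) = 0 := le_antisymm (hDeq ▸ hD) Metric.diam_nonneg
    have hsub : (tsupport f).Subsingleton := by
      have hb : Bornology.IsBounded (tsupport f) := hsupp.isBounded
      have he : EMetric.diam (tsupport f) = 0 := by
        rcases ENNReal.toReal_eq_zero_iff (EMetric.diam (tsupport f)) |>.1 hdiam0 with h | h
        · exact h
        · exact absurd h hb.ediam_ne_top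
      exact EMetric.diam_eq_zero_iff.1 he
    have hzero : ∀ p, f p = 0 := by
      rcases (tsupport f).eq_empty_or_nonempty with he | ⟨a, ha⟩
      · intro p
        exact image_eq_zero_of_notMem_tsupport (by rw [he]; exact Set.notMem_empty p)
      · have hsubset : tsupport f ⊆ {a} := fun q hq => Set.mem_singleton_iff.2 (hsub hq ha)
        have : f = fun _ => (0:ℝ) := by
          apply Continuous.ext_on (dense_compl_singleton a) hsmooth.continuous continuous_const
          intro q hq
          exact image_eq_zero_of_notMem_tsupport (fun hmem => hq (hsubset hmem))
        intro p; rw [this]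
    have hgz : ∀ z r, g z r = 0 := by
      intro z r
      rw [hg]
      simp [hzero]
    refine ⟨0, le_refl 0, ?_, ?_⟩
    · intro x z y
      have h1 : (fun t : ℝ => g z (Real.sqrt (‖x - z‖ ^ 2 + t ^ 2))) = fun _ => (0:ℝ) :=
        funext fun t => hgz _ _
      rw [h1, deriv_const]
      simp
    · intro x y
      have h1 : (fun z : EuclideanSpace ℝ (Fin n) =>
          deriv (fun t : ℝ => g z (Real.sqrt (‖x - z‖ ^ 2 + t ^ 2))) y) = fun _ => (0:ℝ) := by
        funext z
        have h2 : (fun t : ℝ => g z (Real.sqrt (‖x - z‖ ^ 2 + t ^ 2))) = fun _ => (0:ℝ) :=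
          funext fun t => hgz _ _
        rw [h2, deriv_const]
      rw [h1]
      exact integrable_zero _ _ _
  -- main case : 0 < D
  set σm := (volume : Measure (EuclideanSpace ℝ (Fin (n + 1)))).toSphere with hσm
  set emb : EuclideanSpace ℝ (Fin n) → EuclideanSpace ℝ (Fin (n+1)) := fun z =>
    (EuclideanSpace.equiv (Fin (n+1)) ℝ).symm
      (fun i => if h : (i:ℕ) < n then z ⟨i, h⟩ else 0) with hemb
  have hpt : ∀ (z : EuclideanSpace ℝ (Fin n)) (r : ℝ) (v : EuclideanSpace ℝ (Fin (n+1))),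
      ((EuclideanSpace.equiv (Fin (n+1)) ℝ).symm
        (fun i => if h : (i:ℕ) < n then z ⟨i, h⟩ + r * v i else r * v i)) = emb z + r • v := by
    intro z r v
    ext i
    show (if h : (i:ℕ) < n then z ⟨i, h⟩ + r * v i else r * v i)
        = (if h : (i:ℕ) < n then z ⟨i, h⟩ else 0) + r * v i
    by_cases h : (i:ℕ) < n
    · rw [dif_pos h, dif_pos h]
    · rw [dif_neg h, dif_neg h, zero_add]
  have hembc : Continuous emb := by
    rw [hemb]
    refine Continuous.comp (EuclideanSpace.equiv (Fin (n+1)) ℝ).symm.continuous ?_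
    apply continuous_pi
    intro i
    by_cases h : (i:ℕ) < n
    · simp only [dif_pos h]; exact (continuous_apply _).comp (by fun_prop)
    · simp only [dif_neg h]; exact continuous_const
  have hg' : ∀ (z : EuclideanSpace ℝ (Fin n)) (r : ℝ), g z r = (1 / S) *
      ∫ v : Metric.sphere (0 : EuclideanSpace ℝ (Fin (n + 1))) 1,
        f (emb z + r • (v : EuclideanSpace ℝ (Fin (n + 1)))) ∂σm := by
    intro z r
    rw [hg]
    simp only [hpt]
  -- positivity of S
  have hS0 : 0 < S := by
    rw [hS, Measure.toSphere_apply_univ, finrank_euclideanSpace_fin]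
    apply ENNReal.toReal_pos
    · exact mul_ne_zero (by simp) (measure_ball_pos volume _ one_pos).ne'
    · exact ENNReal.mul_ne_top (ENNReal.natCast_ne_top _) measure_ball_lt_top.ne
  obtain ⟨Cf, hCf⟩ := hsupp.exists_bound_of_continuous hsmooth.continuous
  have hfd : Differentiable ℝ f := hsmooth.differentiable (by simp)
  have hfdc : Continuous (fderiv ℝ f) := hsmooth.continuous_fderiv (by simp)
  -- pointwise bound on the sphere integral of the derivative
  have keybound : ∀ (Z : EuclideanSpace ℝ (Fin (n+1))) (ρ : ℝ),
      |∫ v : Metric.sphere (0 : EuclideanSpace ℝ (Fin (n + 1))) 1,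
          (fderiv ℝ f (Z + ρ • (v : EuclideanSpace ℝ (Fin (n+1))))) ↑v ∂σm| ≤
        M * (σm {v : Metric.sphere (0 : EuclideanSpace ℝ (Fin (n + 1))) 1 |
          Z + ρ • (v : EuclideanSpace ℝ (Fin (n+1))) ∈ tsupport f}).toReal := by
    intro Z ρ
    set A := {v : Metric.sphere (0 : EuclideanSpace ℝ (Fin (n + 1))) 1 |
      Z + ρ • (v : EuclideanSpace ℝ (Fin (n+1))) ∈ tsupport f} with hA
    have hAm : MeasurableSet A := by
      have h1 : A = (fun v : Metric.sphere (0 : EuclideanSpace ℝ (Fin (n+1))) 1 =>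
          Z + ρ • (v : EuclideanSpace ℝ (Fin (n+1)))) ⁻¹' tsupport f := rfl
      rw [h1]
      exact ((isClosed_tsupport f).preimage
        (continuous_const.add (continuous_subtype_val.const_smul ρ))).measurableSet
    have hint : Integrable (A.indicator (fun _ => M)) σm := (integrable_const M).indicator hAm
    have hb : ∀ v : Metric.sphere (0 : EuclideanSpace ℝ (Fin (n + 1))) 1,
        ‖(fderiv ℝ f (Z + ρ • (v : EuclideanSpace ℝ (Fin (n+1))))) ↑v‖ ≤
          A.indicator (fun _ => M) v := by
      intro v
      by_cases hv : v ∈ A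
      · rw [Set.indicator_of_mem hv]
        calc ‖(fderiv ℝ f (Z + ρ • (v : EuclideanSpace ℝ (Fin (n+1))))) ↑v‖
            ≤ ‖fderiv ℝ f (Z + ρ • (v : EuclideanSpace ℝ (Fin (n+1))))‖ *
              ‖(v : EuclideanSpace ℝ (Fin (n+1)))‖ := ContinuousLinearMap.le_opNorm _ _
          _ = ‖fderiv ℝ f (Z + ρ • (v : EuclideanSpace ℝ (Fin (n+1))))‖ := by
              rw [mem_sphere_zero_iff_norm.1 v.2, mul_one]
          _ ≤ M := hM _
      · rw [Set.indicator_of_notMem hv]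
        have h0 : fderiv ℝ f (Z + ρ • (v : EuclideanSpace ℝ (Fin (n+1)))) = 0 := by
          by_contra hne
          exact hv (support_fderiv_subset ℝ (Function.mem_support.2 hne))
        simp [h0]
    have h2 := norm_integral_le_of_norm_le hint (Eventually.of_forall hb)
    rw [Real.norm_eq_abs] at h2
    refine h2.trans ?_
    rw [integral_indicator_const (M : ℝ) hAm, smul_eq_mul, mul_comm]
    exact le_rfl
  -- the derivative computation
  have key : ∀ (x z : EuclideanSpace ℝ (Fin n)) (y : ℝ), y ≠ 0 →
      HasDerivAt (fun t : ℝ => g z (Real.sqrt (‖x - z‖ ^ 2 + t ^ 2)))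
        ((1/S) * ((y / Real.sqrt (‖x - z‖ ^ 2 + y ^ 2)) *
          ∫ v : Metric.sphere (0 : EuclideanSpace ℝ (Fin (n + 1))) 1,
            (fderiv ℝ f (emb z + Real.sqrt (‖x - z‖ ^ 2 + y ^ 2) •
              (v : EuclideanSpace ℝ (Fin (n+1))))) ↑v ∂σm)) y := by
    intro x z y hy
    have hyabs : 0 < |y| := abs_pos.2 hy
    have hy2 : 0 < y^2 := by nlinarith [sq_abs y]
    have hball : ∀ t : ℝ, t ∈ ball y (|y|/2) → t ≠ 0 := by
      intro t ht h0
      rw [Metric.mem_ball, Real.dist_eq, h0, zero_sub, abs_neg] at ht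
      linarith
    have hmain := hasDerivAt_integral_of_dominated_loc_of_deriv_le (μ := σm)
      (F := fun (t : ℝ) (v : Metric.sphere (0 : EuclideanSpace ℝ (Fin (n + 1))) 1) =>
        f (emb z + Real.sqrt (‖x - z‖^2 + t^2) • (v : EuclideanSpace ℝ (Fin (n+1)))))
      (F' := fun (t : ℝ) (v : Metric.sphere (0 : EuclideanSpace ℝ (Fin (n + 1))) 1) =>
        (t / Real.sqrt (‖x - z‖^2 + t^2)) *
          ((fderiv ℝ f (emb z + Real.sqrt (‖x - z‖^2 + t^2) •
            (v : EuclideanSpace ℝ (Fin (n+1))))) ↑v))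
      (x₀ := y) (bound := fun _ => M) (ball_mem_nhds y (half_pos hyabs))
      (Eventually.of_forall fun t => (hsmooth.continuous.comp
        (continuous_const.add (continuous_subtype_val.const_smul (Real.sqrt (‖x - z‖^2 + t^2))))).aestronglyMeasurable)
      ((integrable_const Cf).mono' ((hsmooth.continuous.comp
        (continuous_const.add (continuous_subtype_val.const_smul (Real.sqrt (‖x - z‖^2 + y^2))))).aestronglyMeasurable)
        (Eventually.of_forall fun v => hCf _))
      ((continuous_const.mul ((hfdc.comp (continuous_const.add
        (continuous_subtype_val.const_smul (Real.sqrt (‖x - z‖^2 + y^2))))).clm_apply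
          continuous_subtype_val)).aestronglyMeasurable)
      (Eventually.of_forall fun v => by
        intro t ht
        have ht0 : t ≠ 0 := hball t ht
        have hst : (0:ℝ) < ‖x - z‖^2 + t^2 := by nlinarith [sq_abs t, abs_pos.2 ht0, sq_nonneg ‖x - z‖]
        have hsq : 0 < Real.sqrt (‖x - z‖^2 + t^2) := Real.sqrt_pos.2 hst
        rw [norm_mul]
        have h1 : ‖t / Real.sqrt (‖x - z‖^2 + t^2)‖ ≤ 1 := by
          rw [Real.norm_eq_abs, abs_div, abs_of_pos hsq, div_le_one hsq,
            ← Real.sqrt_sq_eq_abs]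
          exact Real.sqrt_le_sqrt (by nlinarith [sq_nonneg ‖x - z‖])
        have h2 : ‖(fderiv ℝ f (emb z + Real.sqrt (‖x - z‖^2 + t^2) •
            (v : EuclideanSpace ℝ (Fin (n+1))))) ↑v‖ ≤ M := by
          calc ‖(fderiv ℝ f _) ↑v‖ ≤ ‖fderiv ℝ f _‖ * ‖(v : EuclideanSpace ℝ (Fin (n+1)))‖ :=
                ContinuousLinearMap.le_opNorm _ _
            _ = ‖fderiv ℝ f _‖ := by rw [mem_sphere_zero_iff_norm.1 v.2, mul_one]
            _ ≤ M := hM _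
        calc ‖t / Real.sqrt (‖x - z‖^2 + t^2)‖ * ‖(fderiv ℝ f _) ↑v‖ ≤ 1 * M :=
              mul_le_mul h1 h2 (norm_nonneg _) zero_le_one
          _ = M := one_mul M)
      (integrable_const M)
      (Eventually.of_forall fun v => by
        intro t ht
        have ht0 : t ≠ 0 := hball t ht
        have hst : (0:ℝ) < ‖x - z‖^2 + t^2 := by nlinarith [sq_abs t, abs_pos.2 ht0, sq_nonneg ‖x - z‖]
        have hsq : 0 < Real.sqrt (‖x - z‖^2 + t^2) := Real.sqrt_pos.2 hst
        have h1 : HasDerivAt (fun s : ℝ => ‖x - z‖^2 + s^2) (2*t) t := by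
          simpa using (hasDerivAt_pow 2 t).const_add (‖x - z‖^2)
        have h2 : HasDerivAt (fun s : ℝ => Real.sqrt (‖x - z‖^2 + s^2))
            (t / Real.sqrt (‖x - z‖^2 + t^2)) t := by
          have h3 := (Real.hasDerivAt_sqrt hst.ne').comp t h1
          have h6 : t / Real.sqrt (‖x - z‖^2 + t^2) =
              1 / (2 * Real.sqrt (‖x - z‖^2 + t^2)) * (2 * t) := by ring
          rw [h6]; exact h3
        have h4 : HasDerivAt (fun s : ℝ => emb z + Real.sqrt (‖x - z‖^2 + s^2) •
            (v : EuclideanSpace ℝ (Fin (n+1))))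
            ((t / Real.sqrt (‖x - z‖^2 + t^2)) • (v : EuclideanSpace ℝ (Fin (n+1)))) t :=
          (h2.smul_const _).const_add (emb z)
        have h5 := (hfd _).hasFDerivAt.comp_hasDerivAt t h4
        simpa [ContinuousLinearMap.map_smul, smul_eq_mul, Function.comp_def] using h5)
    obtain ⟨-, hDer⟩ := hmain
    have hgfun : (fun t : ℝ => g z (Real.sqrt (‖x - z‖ ^ 2 + t ^ 2))) =
        fun t : ℝ => (1/S) * ∫ v : Metric.sphere (0 : EuclideanSpace ℝ (Fin (n + 1))) 1,
          f (emb z + Real.sqrt (‖x - z‖^2 + t^2) • (v : EuclideanSpace ℝ (Fin (n+1)))) ∂σm :=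
      funext fun t => hg' z _
    rw [hgfun]
    have h6 := hDer.const_mul (1/S)
    have h7 : (∫ v : Metric.sphere (0 : EuclideanSpace ℝ (Fin (n + 1))) 1,
        (y / Real.sqrt (‖x - z‖^2 + y^2)) *
          ((fderiv ℝ f (emb z + Real.sqrt (‖x - z‖^2 + y^2) •
            (v : EuclideanSpace ℝ (Fin (n+1))))) ↑v) ∂σm)
        = (y / Real.sqrt (‖x - z‖^2 + y^2)) *
          ∫ v : Metric.sphere (0 : EuclideanSpace ℝ (Fin (n + 1))) 1,
            (fderiv ℝ f (emb z + Real.sqrt (‖x - z‖^2 + y^2) •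
              (v : EuclideanSpace ℝ (Fin (n+1))))) ↑v ∂σm := integral_const_mul _ _
    rw [h7] at h6
    exact h6
  -- constants
  set κr : ℝ := ((volume : Measure (EuclideanSpace ℝ (Fin (n+1)))) (Metric.ball 0 1)).toReal
    with hκr
  have hκr0 : 0 ≤ κr := ENNReal.toReal_nonneg
  set B : ℝ := ((n:ℝ)+1) * 3 * 2^(n+1) * κr + S with hB
  have hB0 : 0 ≤ B := by
    have h1 : (0:ℝ) ≤ ((n:ℝ)+1) * 3 * 2^(n+1) * κr := by positivity
    linarith
  set C : ℝ := B * D^n / (S * D) with hC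
  have hC0 : 0 ≤ C := by
    apply div_nonneg (mul_nonneg hB0 (by positivity)) (by positivity)
  -- cap estimate in convenient form
  have hcap : ∀ (Z : EuclideanSpace ℝ (Fin (n+1))) (ρ : ℝ), 0 < ρ →
      (σm {v : Metric.sphere (0 : EuclideanSpace ℝ (Fin (n + 1))) 1 |
        Z + ρ • (v : EuclideanSpace ℝ (Fin (n+1))) ∈ tsupport f}).toReal ≤ B * D^n / ρ^n := by
    intro Z ρ hρ0
    rcases le_or_gt D ρ with hcase | hcase
    · have h1 := aux_cap_bound hsupp hD hDpos hcase Z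
      rw [← hσm, ← hκr] at h1
      refine h1.trans ?_
      have h2 : ((n:ℝ)+1)*3*2^(n+1)*(D/ρ)^n*κr = (((n:ℝ)+1)*3*2^(n+1)*κr) * (D^n/ρ^n) := by
        rw [div_pow]; ring
      rw [h2, hB]
      have hq : 0 ≤ D^n/ρ^n := by positivity
      have h3 : (((n:ℝ)+1)*3*2^(n+1)*κr) * (D^n/ρ^n) ≤
          (((n:ℝ)+1)*3*2^(n+1)*κr + S) * (D^n/ρ^n) := by
        apply mul_le_mul_of_nonneg_right _ hq
        linarith
      refine h3.trans_eq ?_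
      rw [mul_div_assoc]
    · have h1 : (σm {v : Metric.sphere (0 : EuclideanSpace ℝ (Fin (n + 1))) 1 |
          Z + ρ • (v : EuclideanSpace ℝ (Fin (n+1))) ∈ tsupport f}).toReal ≤ S := by
        rw [hS]
        apply ENNReal.toReal_mono
        · rw [hσm, Measure.toSphere_apply_univ]
          exact ENNReal.mul_ne_top (ENNReal.natCast_ne_top _) measure_ball_lt_top.ne
        · exact measure_mono (Set.subset_univ _)
      refine h1.trans ?_
      have h2 : (1:ℝ) ≤ D^n/ρ^n := by
        rw [le_div_iff₀ (by positivity), one_mul]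
        exact pow_le_pow_left₀ hρ0.le hcase.le n
      have h3 : (0:ℝ) ≤ ((n:ℝ)+1) * 3 * 2^(n+1) * κr := by positivity
      calc S = S * 1 := (mul_one S).symm
        _ ≤ B * (D^n/ρ^n) := by
            apply mul_le_mul _ h2 zero_le_one hB0
            rw [hB]; linarith
        _ = B * D^n / ρ^n := by rw [mul_div_assoc]
  -- part 1
  have part1 : ∀ (x z : EuclideanSpace ℝ (Fin n)) (y : ℝ),
      |deriv (fun t : ℝ => g z (Real.sqrt (‖x - z‖ ^ 2 + t ^ 2))) y| ≤
        C * M * D * |y| / (Real.sqrt (‖x - z‖ ^ 2 + y ^ 2)) ^ (n + 1) := by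
    intro x z y
    rcases eq_or_ne y 0 with rfl | hy
    · have hzero : deriv (fun t : ℝ => g z (Real.sqrt (‖x - z‖ ^ 2 + t ^ 2))) 0 = 0 := by
        apply aux_deriv_even
        intro t
        rw [Even.neg_pow even_two]
      rw [hzero]
      simp
    · have hy2 : 0 < y^2 := by nlinarith [sq_abs y, abs_pos.2 hy]
      have hρpos : 0 < Real.sqrt (‖x - z‖ ^ 2 + y ^ 2) :=
        Real.sqrt_pos.2 (by nlinarith [sq_nonneg ‖x - z‖])
      rw [(key x z y hy).deriv]
      set ρy := Real.sqrt (‖x - z‖ ^ 2 + y ^ 2) with hρy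
      set I := ∫ v : Metric.sphere (0 : EuclideanSpace ℝ (Fin (n + 1))) 1,
        (fderiv ℝ f (emb z + ρy • (v : EuclideanSpace ℝ (Fin (n+1))))) ↑v ∂σm with hI
      have hIb : |I| ≤ M * (B * D^n / ρy^n) := by
        refine (keybound (emb z) ρy).trans ?_
        exact mul_le_mul_of_nonneg_left (hcap (emb z) ρy hρpos) hM0
      calc |(1/S) * ((y / ρy) * I)| = (1/S) * ((|y| / ρy) * |I|) := by
            rw [abs_mul, abs_mul, abs_of_pos (one_div_pos.2 hS0), abs_div,
              abs_of_pos hρpos]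
        _ ≤ (1/S) * ((|y| / ρy) * (M * (B * D^n / ρy^n))) := by
            apply mul_le_mul_of_nonneg_left _ (by positivity)
            apply mul_le_mul_of_nonneg_left hIb (by positivity)
        _ = C * M * D * |y| / ρy ^ (n + 1) := by
            rw [hC]
            field_simp
            ring
    -- end part1
  refine ⟨C, hC0, part1, ?_⟩
  intro x y
  rcases eq_or_ne y 0 with rfl | hy
  · have h1 : (fun z : EuclideanSpace ℝ (Fin n) =>
        deriv (fun t : ℝ => g z (Real.sqrt (‖x - z‖ ^ 2 + t ^ 2))) 0) = fun _ => (0:ℝ) := by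
      funext z
      apply aux_deriv_even
      intro t
      rw [Even.neg_pow even_two]
    rw [h1]
    exact integrable_zero _ _ _
  · have hy2 : 0 < y^2 := by nlinarith [sq_abs y, abs_pos.2 hy]
    have hρpos : ∀ z : EuclideanSpace ℝ (Fin n), 0 < Real.sqrt (‖x - z‖ ^ 2 + y ^ 2) :=
      fun z => Real.sqrt_pos.2 (by nlinarith [sq_nonneg ‖x - z‖])
    have hform : (fun z : EuclideanSpace ℝ (Fin n) =>
        deriv (fun t : ℝ => g z (Real.sqrt (‖x - z‖ ^ 2 + t ^ 2))) y) =
        fun z : EuclideanSpace ℝ (Fin n) => (1/S) * ((y / Real.sqrt (‖x - z‖ ^ 2 + y ^ 2)) *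
          ∫ v : Metric.sphere (0 : EuclideanSpace ℝ (Fin (n + 1))) 1,
            (fderiv ℝ f (emb z + Real.sqrt (‖x - z‖ ^ 2 + y ^ 2) •
              (v : EuclideanSpace ℝ (Fin (n+1))))) ↑v ∂σm) :=
      funext fun z => (key x z y hy).deriv
    have hρfc : Continuous (fun z : EuclideanSpace ℝ (Fin n) =>
        Real.sqrt (‖x - z‖ ^ 2 + y ^ 2)) :=
      Real.continuous_sqrt.comp
        ((((continuous_const.sub continuous_id).norm.pow 2).add continuous_const))
    have hcont : Continuous (fun z : EuclideanSpace ℝ (Fin n) =>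
        (1/S) * ((y / Real.sqrt (‖x - z‖ ^ 2 + y ^ 2)) *
          ∫ v : Metric.sphere (0 : EuclideanSpace ℝ (Fin (n + 1))) 1,
            (fderiv ℝ f (emb z + Real.sqrt (‖x - z‖ ^ 2 + y ^ 2) •
              (v : EuclideanSpace ℝ (Fin (n+1))))) ↑v ∂σm)) := by
      apply continuous_const.mul
      apply Continuous.mul
      · exact continuous_const.div hρfc (fun z => (hρpos z).ne')
      · apply continuous_of_dominated (bound := fun _ => M)
        · intro z
          exact ((hfdc.comp (continuous_const.add
            (continuous_subtype_val.const_smul (Real.sqrt (‖x - z‖ ^ 2 + y ^ 2))))).clm_apply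
              continuous_subtype_val).aestronglyMeasurable
        · intro z
          refine Eventually.of_forall fun v => ?_
          calc ‖(fderiv ℝ f (emb z + Real.sqrt (‖x - z‖ ^ 2 + y ^ 2) •
                (v : EuclideanSpace ℝ (Fin (n+1))))) ↑v‖
              ≤ ‖fderiv ℝ f (emb z + Real.sqrt (‖x - z‖ ^ 2 + y ^ 2) •
                (v : EuclideanSpace ℝ (Fin (n+1))))‖ *
                  ‖(v : EuclideanSpace ℝ (Fin (n+1)))‖ := ContinuousLinearMap.le_opNorm _ _
            _ = ‖fderiv ℝ f (emb z + Real.sqrt (‖x - z‖ ^ 2 + y ^ 2) •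
                (v : EuclideanSpace ℝ (Fin (n+1))))‖ := by
                rw [mem_sphere_zero_iff_norm.1 v.2, mul_one]
            _ ≤ M := hM _
        · exact integrable_const M
        · refine Eventually.of_forall fun v => ?_
          exact (hfdc.comp (hembc.add (hρfc.smul continuous_const))).clm_apply continuous_const
    rw [hform]
    set c0 : ℝ := min |y| 1 / 2 with hc0def
    have hc0 : 0 < c0 := by
      have := lt_min (abs_pos.2 hy) one_pos
      rw [hc0def]
      linarith
    have hdom : Integrable (fun z : EuclideanSpace ℝ (Fin n) =>
        (C*M*D*|y| / c0^(n+1)) * (1 + ‖x - z‖) ^ (-((n+1:ℕ):ℝ))) volume := by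
      have hint : Integrable (fun w : EuclideanSpace ℝ (Fin n) =>
          (1 + ‖w‖) ^ (-((n+1:ℕ):ℝ))) volume := by
        apply integrable_one_add_norm
        rw [finrank_euclideanSpace_fin]
        exact_mod_cast Nat.lt_succ_self n
      exact (hint.comp_sub_left x).const_mul _
    apply hdom.mono' hcont.aestronglyMeasurable
    refine Eventually.of_forall fun z => ?_
    rw [Real.norm_eq_abs]
    have hnum : 0 ≤ C*M*D*|y| := by positivity
    calc |(1/S) * ((y / Real.sqrt (‖x - z‖ ^ 2 + y ^ 2)) *
          ∫ v : Metric.sphere (0 : EuclideanSpace ℝ (Fin (n + 1))) 1,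
            (fderiv ℝ f (emb z + Real.sqrt (‖x - z‖ ^ 2 + y ^ 2) •
              (v : EuclideanSpace ℝ (Fin (n+1))))) ↑v ∂σm)|
        = |deriv (fun t : ℝ => g z (Real.sqrt (‖x - z‖ ^ 2 + t ^ 2))) y| := by
          rw [(key x z y hy).deriv]
      _ ≤ C * M * D * |y| / (Real.sqrt (‖x - z‖ ^ 2 + y ^ 2)) ^ (n + 1) := part1 x z y
      _ ≤ (C*M*D*|y| / c0^(n+1)) * (1 + ‖x - z‖) ^ (-((n+1:ℕ):ℝ)) := by
          have h1 : |y| ≤ Real.sqrt (‖x - z‖ ^ 2 + y ^ 2) := by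
            rw [← Real.sqrt_sq_eq_abs]
            exact Real.sqrt_le_sqrt (by nlinarith [sq_nonneg ‖x - z‖])
          have h2 : ‖x - z‖ ≤ Real.sqrt (‖x - z‖ ^ 2 + y ^ 2) := by
            nth_rewrite 1 [← Real.sqrt_sq (norm_nonneg (x - z))]
            exact Real.sqrt_le_sqrt (by nlinarith)
          have h4 : c0 ≤ 1/2 := by
            have := min_le_right |y| 1
            rw [hc0def]; linarith
          have h3 : c0 ≤ |y|/2 := by
            have := min_le_left |y| 1
            rw [hc0def]; linarith
          have hle : c0 * (1 + ‖x - z‖) ≤ Real.sqrt (‖x - z‖ ^ 2 + y ^ 2) := by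
            nlinarith [norm_nonneg (x - z), h1, h2]
          have hpow : c0^(n+1) * (1 + ‖x - z‖)^(n+1) ≤
              (Real.sqrt (‖x - z‖ ^ 2 + y ^ 2)) ^ (n+1) := by
            rw [← mul_pow]
            exact pow_le_pow_left₀ (by positivity) hle _
          have hmain : C*M*D*|y| / (Real.sqrt (‖x - z‖ ^ 2 + y ^ 2)) ^ (n+1) ≤
              C*M*D*|y| / (c0^(n+1) * (1 + ‖x - z‖)^(n+1)) :=
            div_le_div_of_nonneg_left hnum (by positivity) hpow
          refine hmain.trans_eq ?_
          rw [Real.rpow_neg (by positivity), Real.rpow_natCast, ← div_eq_mul_inv, div_div]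
end

section
/- Let h : ℝⁿ × ℝ^(n+1) → ℂ be in L¹ ∩ L², radial in the second variable (h(z, w) = h₀(z, ‖w‖)). Then for all (ξ, η) ∈ ℝⁿ × ℝ, ∫_{ℝⁿ×ℝ} e^{−i(⟨ξ,x⟩+ηy)} (∫_{ℝⁿ} h₀(z, √(‖x−z‖² + y²)) dz) dx dy equals ĥ evaluated at (ξ, η') for any η' ∈ ℝ^(n+1) with ‖η'‖ = √(‖ξ‖² + η²), provided Fubini's theorem applies (all iterated integrals converge absolutely). -/
open MeasureTheory


noncomputable def phi (n : ℕ) : (EuclideanSpace ℝ (Fin n) × ℝ) ≃ᵐ EuclideanSpace ℝ (Fin (n+1)) :=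
  ((MeasurableEquiv.toLp 2 (Fin n → ℝ)).symm.prodCongr (MeasurableEquiv.refl ℝ)).trans <|
  (MeasurableEquiv.prodComm).trans <|
  ((MeasurableEquiv.piFinSuccAbove (fun _ => ℝ) (Fin.last n)).symm).trans
  (MeasurableEquiv.toLp 2 (Fin (n+1) → ℝ))

lemma phi_mp (n : ℕ) : MeasurePreserving (phi n) volume volume := by
  have h1 : MeasurePreserving ((MeasurableEquiv.toLp 2 (Fin n → ℝ)).symm.prodCongr
      (MeasurableEquiv.refl ℝ)) volume volume :=
    (EuclideanSpace.volume_preserving_symm_measurableEquiv_toLp (Fin n)).prod (MeasurePreserving.id _)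
  have h2 : MeasurePreserving (MeasurableEquiv.prodComm :
      ((Fin n → ℝ) × ℝ) ≃ᵐ (ℝ × (Fin n → ℝ))) volume volume := by
    rw [Measure.volume_eq_prod, Measure.volume_eq_prod]; exact Measure.measurePreserving_swap
  have h3 : MeasurePreserving
      ((MeasurableEquiv.piFinSuccAbove (fun _ : Fin (n+1) => ℝ) (Fin.last n)).symm)
      volume volume := by
    have := (volume_preserving_piFinSuccAbove (fun _ : Fin (n+1) => ℝ) (Fin.last n)).symm
    convert this using 2
  have h4 := (EuclideanSpace.volume_preserving_symm_measurableEquiv_toLp (Fin (n+1))).symm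
  exact h4.comp (h3.comp (h2.comp h1))

lemma phi_castSucc (n : ℕ) (x : EuclideanSpace ℝ (Fin n)) (y : ℝ) (j : Fin n) :
    phi n (x, y) j.castSucc = x j := by
  simp [phi, MeasurableEquiv.piFinSuccAbove, MeasurableEquiv.toLp_apply,
    MeasurableEquiv.prodComm, Fin.insertNth_apply_succAbove]
  rfl

lemma phi_last (n : ℕ) (x : EuclideanSpace ℝ (Fin n)) (y : ℝ) :
    phi n (x, y) (Fin.last n) = y := by
  simp [phi, MeasurableEquiv.piFinSuccAbove, MeasurableEquiv.toLp_apply,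
    MeasurableEquiv.prodComm]
  rfl

lemma phi_norm (n : ℕ) (p : EuclideanSpace ℝ (Fin n) × ℝ) :
    ‖phi n p‖ = Real.sqrt (‖p.1‖ ^ 2 + p.2 ^ 2) := by
  obtain ⟨x, y⟩ := p
  rw [EuclideanSpace.norm_eq, Fin.sum_univ_castSucc]
  simp only [phi_castSucc, phi_last]
  congr 1
  rw [EuclideanSpace.norm_eq, Real.sq_sqrt (by positivity)]
  simp [sq_abs]

lemma phi_inner (n : ℕ) (p q : EuclideanSpace ℝ (Fin n) × ℝ) :
    (inner ℝ (phi n p) (phi n q) : ℝ) = (inner ℝ p.1 q.1 : ℝ) + p.2 * q.2 := by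
  obtain ⟨x, y⟩ := p; obtain ⟨x', y'⟩ := q
  simp only [PiLp.inner_apply, RCLike.inner_apply, starRingEnd_apply, star_trivial]
  rw [Fin.sum_univ_castSucc]
  simp [phi_castSucc, phi_last]
  ring

lemma norm_exp_neg_I_mul (r : ℝ) : ‖Complex.exp (-Complex.I * r)‖ = 1 := by
  simp [Complex.norm_exp]

lemma key (n : ℕ) (g : ℝ → ℂ) (z ξ : EuclideanSpace ℝ (Fin n)) (η : ℝ)
    (η' : EuclideanSpace ℝ (Fin (n + 1)))
    (hη' : ‖η'‖ = Real.sqrt (‖ξ‖ ^ 2 + η ^ 2)) :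
    (∫ p : EuclideanSpace ℝ (Fin n) × ℝ,
        Complex.exp (-Complex.I * ((inner ℝ ξ p.1 + η * p.2 : ℝ) : ℂ)) *
          g (Real.sqrt (‖p.1 - z‖ ^ 2 + p.2 ^ 2))) =
      ∫ w : EuclideanSpace ℝ (Fin (n + 1)),
        Complex.exp (-Complex.I * ((inner ℝ ξ z + inner ℝ η' w : ℝ) : ℂ)) * g ‖w‖ := by
  set u : EuclideanSpace ℝ (Fin (n + 1)) := phi n (ξ, η) with hu
  have hnu : ‖η'‖ = ‖u‖ := by
    rw [hη', hu, phi_norm]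
  set O : EuclideanSpace ℝ (Fin (n + 1)) ≃ₗᵢ[ℝ] EuclideanSpace ℝ (Fin (n + 1)) :=
    Submodule.reflection (ℝ ∙ (η' - u))ᗮ with hO
  have hOη' : O η' = u := Submodule.reflection_sub hnu
  set G : EuclideanSpace ℝ (Fin (n + 1)) → ℂ :=
    fun w => Complex.exp (-Complex.I * ((inner ℝ u w : ℝ) : ℂ)) * g ‖w‖ with hG
  set Φ : EuclideanSpace ℝ (Fin n) × ℝ → ℂ :=
    fun p => Complex.exp (-Complex.I * ((inner ℝ ξ z : ℝ) : ℂ)) * G (phi n p) with hΦ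
  calc (∫ p : EuclideanSpace ℝ (Fin n) × ℝ,
        Complex.exp (-Complex.I * ((inner ℝ ξ p.1 + η * p.2 : ℝ) : ℂ)) *
          g (Real.sqrt (‖p.1 - z‖ ^ 2 + p.2 ^ 2)))
      = ∫ p : EuclideanSpace ℝ (Fin n) × ℝ, Φ (p - (z, 0)) := by
        refine integral_congr_ae (Filter.Eventually.of_forall fun p => ?_)
        have h1 : (p - ((z, 0) : EuclideanSpace ℝ (Fin n) × ℝ)) = (p.1 - z, p.2) := by
          ext <;> simp
        show _ = Φ (p - (z, 0))
        rw [h1, hΦ, hG, hu]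
        simp only [phi_norm, phi_inner]
        rw [← mul_assoc, ← Complex.exp_add, ← mul_add, ← Complex.ofReal_add]
        have hAB : (inner ℝ ξ p.1 + η * p.2 : ℝ)
            = inner ℝ ξ z + (inner ℝ ξ (p.1 - z) + η * p.2) := by
          rw [inner_sub_right]; ring
        rw [hAB]
    _ = ∫ p : EuclideanSpace ℝ (Fin n) × ℝ, Φ p := by
        haveI : (volume : Measure (EuclideanSpace ℝ (Fin n) × ℝ)).IsAddRightInvariant := by
          rw [Measure.volume_eq_prod]; infer_instance
        exact integral_sub_right_eq_self Φ (z, 0)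
    _ = Complex.exp (-Complex.I * ((inner ℝ ξ z : ℝ) : ℂ)) *
          ∫ p : EuclideanSpace ℝ (Fin n) × ℝ, G (phi n p) := integral_const_mul _ _
    _ = Complex.exp (-Complex.I * ((inner ℝ ξ z : ℝ) : ℂ)) *
          ∫ w : EuclideanSpace ℝ (Fin (n + 1)), G w := by
        rw [(phi_mp n).integral_comp (phi n).measurableEmbedding G]
    _ = Complex.exp (-Complex.I * ((inner ℝ ξ z : ℝ) : ℂ)) *
          ∫ w : EuclideanSpace ℝ (Fin (n + 1)), G (O w) := by
        rw [(O.measurePreserving).integral_comp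
          O.toHomeomorph.measurableEmbedding G]
    _ = ∫ w : EuclideanSpace ℝ (Fin (n + 1)),
        Complex.exp (-Complex.I * ((inner ℝ ξ z + inner ℝ η' w : ℝ) : ℂ)) * g ‖w‖ := by
        rw [← integral_const_mul]
        refine integral_congr_ae (Filter.Eventually.of_forall fun w => ?_)
        have h2 : (inner ℝ u (O w) : ℝ) = (inner ℝ η' w : ℝ) := by
          rw [← hOη', LinearIsometryEquiv.inner_map_map]
        simp only [hG, h2, O.norm_map]
        rw [← mul_assoc, ← Complex.exp_add, ← mul_add, ← Complex.ofReal_add]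


/-- Let `h : ℝⁿ × ℝ^(n+1) → ℂ` be in `L¹ ∩ L²` and radial in the second variable,
`h(z,w) = h₀(z,‖w‖)`. If all iterated integrals converge absolutely (so that Fubini's theorem
applies), then for all `(ξ,η) ∈ ℝⁿ × ℝ`,
`∫ e^{−i(⟨ξ,x⟩+ηy)} (∫ h₀(z,√(‖x−z‖²+y²)) dz) dx dy = ĥ(ξ,η')` for any `η' ∈ ℝ^(n+1)` with
`‖η'‖ = √(‖ξ‖²+η²)`, where `ĥ` is the (non-unitary) Fourier transform of `h` on `ℝ^(2n+1)`. -/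
theorem stmt_16 (n : ℕ)
    (h : EuclideanSpace ℝ (Fin n) × EuclideanSpace ℝ (Fin (n + 1)) → ℂ)
    (h₀ : EuclideanSpace ℝ (Fin n) → ℝ → ℂ)
    (hL1 : Integrable h) (hL2 : MemLp h 2 volume)
    (hrad : ∀ z w, h (z, w) = h₀ z ‖w‖)
    (hFubini : Integrable (fun q : (EuclideanSpace ℝ (Fin n) × ℝ) × EuclideanSpace ℝ (Fin n) =>
      h₀ q.2 (Real.sqrt (‖q.1.1 - q.2‖ ^ 2 + q.1.2 ^ 2))))
    (ξ : EuclideanSpace ℝ (Fin n)) (η : ℝ)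
    (η' : EuclideanSpace ℝ (Fin (n + 1)))
    (hη' : ‖η'‖ = Real.sqrt (‖ξ‖ ^ 2 + η ^ 2)) :
    (∫ p : EuclideanSpace ℝ (Fin n) × ℝ,
        Complex.exp (-Complex.I * ((inner ℝ ξ p.1 : ℝ) + η * p.2)) *
          ∫ z : EuclideanSpace ℝ (Fin n), h₀ z (Real.sqrt (‖p.1 - z‖ ^ 2 + p.2 ^ 2))) =
      ∫ q : EuclideanSpace ℝ (Fin n) × EuclideanSpace ℝ (Fin (n + 1)),
        Complex.exp (-Complex.I * ((inner ℝ ξ q.1 : ℝ) + (inner ℝ η' q.2 : ℝ))) * h q := by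

  simp_rw [← Complex.ofReal_mul, ← Complex.ofReal_add]
  have hint1 : Integrable (fun q : (EuclideanSpace ℝ (Fin n) × ℝ) × EuclideanSpace ℝ (Fin n) =>
      Complex.exp (-Complex.I * ((inner ℝ ξ q.1.1 + η * q.1.2 : ℝ) : ℂ)) *
        h₀ q.2 (Real.sqrt (‖q.1.1 - q.2‖ ^ 2 + q.1.2 ^ 2))) volume := by
    refine hFubini.bdd_mul ?_ (Filter.Eventually.of_forall fun q => le_of_eq (norm_exp_neg_I_mul _))
    exact Continuous.aestronglyMeasurable (Complex.continuous_exp.comp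
      (continuous_const.mul (Complex.continuous_ofReal.comp
        ((continuous_const.inner (continuous_fst.comp continuous_fst)).add
          (continuous_const.mul (continuous_snd.comp continuous_fst))))))
  have hint2 : Integrable (fun q : EuclideanSpace ℝ (Fin n) × EuclideanSpace ℝ (Fin (n + 1)) =>
      Complex.exp (-Complex.I * ((inner ℝ ξ q.1 + inner ℝ η' q.2 : ℝ) : ℂ)) * h q) volume := by
    refine hL1.bdd_mul ?_ (Filter.Eventually.of_forall fun q => le_of_eq (norm_exp_neg_I_mul _))
    exact Continuous.aestronglyMeasurable (Complex.continuous_exp.comp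
      (continuous_const.mul (Complex.continuous_ofReal.comp
        ((continuous_const.inner continuous_fst).add
          (continuous_const.inner continuous_snd)))))
  calc (∫ p : EuclideanSpace ℝ (Fin n) × ℝ,
        Complex.exp (-Complex.I * ((inner ℝ ξ p.1 + η * p.2 : ℝ) : ℂ)) *
          ∫ z : EuclideanSpace ℝ (Fin n), h₀ z (Real.sqrt (‖p.1 - z‖ ^ 2 + p.2 ^ 2)))
      = ∫ p : EuclideanSpace ℝ (Fin n) × ℝ, ∫ z : EuclideanSpace ℝ (Fin n),
          Complex.exp (-Complex.I * ((inner ℝ ξ p.1 + η * p.2 : ℝ) : ℂ)) *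
            h₀ z (Real.sqrt (‖p.1 - z‖ ^ 2 + p.2 ^ 2)) := by
        simp_rw [integral_const_mul]
    _ = ∫ z : EuclideanSpace ℝ (Fin n), ∫ p : EuclideanSpace ℝ (Fin n) × ℝ,
          Complex.exp (-Complex.I * ((inner ℝ ξ p.1 + η * p.2 : ℝ) : ℂ)) *
            h₀ z (Real.sqrt (‖p.1 - z‖ ^ 2 + p.2 ^ 2)) := by
        apply integral_integral_swap
        rwa [Measure.volume_eq_prod] at hint1
    _ = ∫ z : EuclideanSpace ℝ (Fin n), ∫ w : EuclideanSpace ℝ (Fin (n + 1)),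
          Complex.exp (-Complex.I * ((inner ℝ ξ z + inner ℝ η' w : ℝ) : ℂ)) * h (z, w) := by
        refine integral_congr_ae (Filter.Eventually.of_forall fun z => ?_)
        simp_rw [hrad]
        exact key n (h₀ z) z ξ η η' hη'
    _ = ∫ q : EuclideanSpace ℝ (Fin n) × EuclideanSpace ℝ (Fin (n + 1)),
          Complex.exp (-Complex.I * ((inner ℝ ξ q.1 + inner ℝ η' q.2 : ℝ) : ℂ)) * h q := by
        rw [Measure.volume_eq_prod] at hint2 ⊢
        exact (integral_prod _ hint2).symm
end
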